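/- arXiv:2512.00648 — 10 statements merged into one kernel-verified Lean document; each statement's English description precedes it below -/
import Mathlib

section
/- Let φ : R → S be a ring map such that S is a projective R-module and for all maximal ideals m of R, mS ≠ S. Then φ has an R-linear left inverse, i.e., there is an R-module map σ : S → R with σ ∘ φ = id_R. -/
/-- If `φ : R → S` is a ring map making `S` a projective `R`-module, and
`mS ≠ S` for every maximal ideal `m` of `R`, then `φ` has an `R`-linear left inverse. -/
theorem exists_left_inverse_of_projective (R S : Type*) [CommRing R] [CommRing S]
    [Algebra R S] [Module.Projective R S]
    (h : ∀ m : Ideal R, m.IsMaximal → Ideal.map (algebraMap R S) m ≠ ⊤) :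
    ∃ σ : S →ₗ[R] R, ∀ r : R, σ (algebraMap R S r) = r := by
  obtain ⟨s, hs⟩ := Module.projective_def.mp (inferInstance : Module.Projective R S)
  -- the "trace" ideal of values σ 1
  set ev : (S →ₗ[R] R) →ₗ[R] R := LinearMap.applyₗ (1 : S)
  set I : Ideal R := LinearMap.range ev with hI
  have h1 : (1 : R) ∈ I := by
    by_contra h1
    have hIne : I ≠ ⊤ := fun ht => h1 (ht ▸ Submodule.mem_top)
    obtain ⟨m, hm, hIm⟩ := Ideal.exists_le_maximal I hIne
    apply h m hm
    rw [Ideal.eq_top_iff_one]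
    have key : (1 : S) = ((s 1).support.sum fun x => (s 1) x • x) := by
      conv_lhs => rw [← hs 1]
      rw [Finsupp.linearCombination_apply, Finsupp.sum]
      simp
    rw [key]
    refine Ideal.sum_mem _ fun x _ => ?_
    have hc : (s 1) x ∈ m := by
      apply hIm
      exact ⟨Finsupp.lapply x ∘ₗ s, rfl⟩
    rw [Algebra.smul_def]
    exact Ideal.mul_mem_right _ _ (Ideal.mem_map_of_mem _ hc)
  obtain ⟨σ, hσ⟩ := h1
  refine ⟨σ, fun r => ?_⟩
  rw [Algebra.algebraMap_eq_smul_one, map_smul]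
  simp only [ev, LinearMap.applyₗ_apply_apply] at hσ
  rw [hσ, smul_eq_mul, mul_one]
end

section
/- Let (A, m, κ) be a Noetherian complete local ring of Krull dimension at least 1. Then a free A-module of infinite rank is never m-adically complete (i.e., the natural map from A^{⊕I} to its m-adic completion is not an isomorphism for any infinite index set I). -/
open IsLocalRing Finsupp

/-- From Krull dimension at least one, extract an element of the maximal ideal
none of whose powers are zero. -/
lemma exists_pow_ne_zero_mem_maximalIdeal (A : Type*) [CommRing A] [IsLocalRing A]
    (hdim : 1 ≤ ringKrullDim A) :
    ∃ x : A, x ∈ maximalIdeal A ∧ ∀ n : ℕ, x ^ n ≠ 0 := by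
  -- get two primes p < q
  obtain ⟨p, q, hpq⟩ : ∃ p q : PrimeSpectrum A, p < q := by
    by_contra h
    push_neg at h
    have : ringKrullDim A ≤ 0 := by
      refine iSup_le fun s => ?_
      have hlen : s.length = 0 := by
        by_contra hl
        exact absurd (s.step ⟨0, Nat.pos_of_ne_zero hl⟩) (h _ _)
      simp [hlen]
    exact absurd (hdim.trans this) (by norm_num)
  obtain ⟨x, hxq, hxp⟩ := SetLike.exists_of_lt (show p.asIdeal < q.asIdeal from hpq)
  refine ⟨x, IsLocalRing.le_maximalIdeal q.isPrime.ne_top hxq, fun n hn => ?_⟩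
  have : x ^ n ∈ p.asIdeal := hn ▸ p.asIdeal.zero_mem
  exact hxp (p.isPrime.mem_of_pow_mem n this)

/-- Let `(A, m)` be a Noetherian complete local ring of Krull dimension
at least `1`. Then a free `A`-module of infinite rank is never `m`-adically complete. -/
theorem free_module_infinite_rank_not_adicComplete (A : Type*) [CommRing A]
    [IsNoetherianRing A] [IsLocalRing A]
    [IsAdicComplete (IsLocalRing.maximalIdeal A) A]
    (hdim : 1 ≤ ringKrullDim A)
    (ι : Type*) [Infinite ι] :
    ¬ IsAdicComplete (IsLocalRing.maximalIdeal A) (ι →₀ A) := by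
  intro hC
  classical
  set I := maximalIdeal A with hI
  obtain ⟨x, hxm, hxne⟩ := exists_pow_ne_zero_mem_maximalIdeal A hdim
  set e : ℕ ↪ ι := Infinite.natEmbedding ι with he
  -- the Cauchy sequence of partial sums
  set F : ℕ → (ι →₀ A) := fun N => ∑ n ∈ Finset.range N, Finsupp.single (e n) (x ^ n) with hF
  have hcoord : ∀ N k, k < N → F N (e k) = x ^ k := by
    intro N k hk
    simp only [hF, Finsupp.finset_sum_apply]
    rw [Finset.sum_eq_single k]
    · simp
    · intro b _ hbk
      rw [Finsupp.single_apply, if_neg (fun h => hbk (e.injective h))]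
    · intro h; exact absurd (Finset.mem_range.2 hk) h
  -- membership of the increments
  have hmem : ∀ {m n : ℕ}, m ≤ n → F n - F m ∈ (I ^ m • ⊤ : Submodule A (ι →₀ A)) := by
    intro m n hmn
    simp only [hF]
    rw [← Finset.sum_range_add_sum_Ico _ hmn, add_sub_cancel_left]
    refine Submodule.sum_mem _ fun k hk => ?_
    have hxk : x ^ k ∈ I ^ m := by
      have : I ^ k ≤ I ^ m := Ideal.pow_le_pow_right (Finset.mem_Ico.1 hk).1
      exact this (Ideal.pow_mem_pow hxm k)
    have : Finsupp.single (e k) (x ^ k) = (x ^ k) • Finsupp.single (e k) (1 : A) := by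
      rw [Finsupp.smul_single, smul_eq_mul, mul_one]
    rw [this]
    exact Submodule.smul_mem_smul hxk Submodule.mem_top
  obtain ⟨L, hL⟩ := hC.toIsPrecomplete.prec
    (fun {m n} hmn => (SModEq.sub_mem).2 (by simpa using Submodule.neg_mem _ (hmem hmn)))
  -- each coordinate of L is determined: L (e k) = x ^ k
  have hLval : ∀ k : ℕ, L (e k) = x ^ k := by
    intro k
    have key : ∀ N : ℕ, L (e k) - x ^ k ∈ (I ^ N : Ideal A) := by
      intro N
      set M := max N (k + 1) with hM
      have h1 : F M - L ∈ (I ^ M • ⊤ : Submodule A (ι →₀ A)) := (SModEq.sub_mem).1 (hL M)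
      -- apply the evaluation map
      have h2 : (F M - L) (e k) ∈ (I ^ M • ⊤ : Submodule A A) := by
        have hmap : Submodule.map (Finsupp.lapply (e k)) (I ^ M • ⊤ : Submodule A (ι →₀ A))
            ≤ (I ^ M • ⊤ : Submodule A A) := by
          rw [Submodule.map_smul'']
          exact Submodule.smul_mono le_rfl le_top
        exact hmap ⟨_, h1, rfl⟩
      have h3 : (F M - L) (e k) ∈ (I ^ M : Ideal A) := by
        have : (I ^ M • ⊤ : Submodule A A) = I ^ M := by
          rw [smul_eq_mul, Ideal.mul_top]
        rwa [this] at h2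
      have heq : (F M - L) (e k) = x ^ k - L (e k) := by
        rw [Finsupp.sub_apply, hcoord M k (lt_of_lt_of_le (Nat.lt_succ_self k) (le_max_right _ _))]
      have h4 : x ^ k - L (e k) ∈ (I ^ M : Ideal A) := heq ▸ h3
      have h5 : L (e k) - x ^ k ∈ (I ^ M : Ideal A) := by
        simpa using Submodule.neg_mem _ h4
      exact Ideal.pow_le_pow_right (le_max_left _ _) h5
    have haus : IsHausdorff I A := inferInstance
    have := haus.haus (L (e k) - x ^ k) (fun n => (SModEq.sub_mem).2 (by
      rw [sub_zero]
      have : (I ^ n • ⊤ : Submodule A A) = I ^ n := by rw [smul_eq_mul, Ideal.mul_top]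
      rw [this]; exact key n))
    exact sub_eq_zero.1 this
  -- L has infinite support, contradiction
  have hsubset : ∀ k : ℕ, e k ∈ L.support := fun k =>
    Finsupp.mem_support_iff.2 (by rw [hLval k]; exact hxne k)
  have : (↑L.support : Set ι).Infinite :=
    Set.infinite_of_injective_forall_mem (f := fun k : ℕ => e k)
      e.injective (fun k => hsubset k)
  exact this (L.support.finite_toSet)
end

section
/- Let R be a commutative ring, I an ideal contained in the Jacobson radical of R, and P a projective R-module. If P/IP = 0, then P = 0. -/
/-- Let `R` be a commutative ring, `I` an ideal contained in the Jacobson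
radical of `R`, and `P` a projective `R`-module. If `P/IP = 0` (i.e. `IP = P`), then `P = 0`. -/
theorem projective_eq_zero_of_jacobson_smul_eq_top (R : Type*) [CommRing R] (I : Ideal R)
    (hI : I ≤ (⊥ : Ideal R).jacobson)
    (P : Type*) [AddCommGroup P] [Module R P] [Module.Projective R P]
    (h : I • (⊤ : Submodule R P) = ⊤) :
    Subsingleton P := by
  classical
  obtain ⟨s, hs⟩ := Module.projective_def.mp ‹Module.Projective R P›
  -- Step 1: every coefficient of every element lies in I
  have key : ∀ x : P, ∀ p : P, s x p ∈ I := by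
    intro x
    have hx : x ∈ I • (⊤ : Submodule R P) := by rw [h]; exact Submodule.mem_top
    refine Submodule.smul_induction_on hx ?_ ?_
    · intro c hc y _ p
      simp only [map_smul, Finsupp.smul_apply, smul_eq_mul]
      exact I.mul_mem_right _ hc
    · intro y z hy hz p
      simpa using I.add_mem (hy p) (hz p)
  constructor
  intro x y
  suffices hz : ∀ z : P, z = 0 by rw [hz x, hz y]
  intro z
  set t : P →₀ R := s z with ht
  -- the ideal generated by the coefficients of z
  set J : Ideal R := Ideal.span (t '' ↑t.support) with hJ
  have hJfg : J.FG := ⟨(t.support).image t, by rw [hJ, Finset.coe_image]⟩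
  have hJle : J ≤ I • J := by
    rw [hJ, Ideal.span_le]
    rintro _ ⟨p, hp, rfl⟩
    -- t p = Σ_{q ∈ t.support} t q * s q p
    have hz' : z = Finsupp.linearCombination R id t := (hs z).symm
    have hexp : t p = ∑ q ∈ t.support, t q * s q p := by
      conv_lhs => rw [ht, hz']
      rw [Finsupp.linearCombination_apply, Finsupp.sum, map_sum]
      simp [Finsupp.finset_sum_apply, mul_comm]
    rw [hexp]
    refine Submodule.sum_mem _ fun q hq => ?_
    rw [mul_comm]
    exact Submodule.smul_mem_smul (key q p)
      (Ideal.subset_span ⟨q, hq, rfl⟩)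
  have hJbot : J = ⊥ := Submodule.eq_bot_of_le_smul_of_le_jacobson_bot I J hJfg hJle hI
  have ht0 : t = 0 := by
    ext p
    by_cases hp : p ∈ t.support
    · have : t p ∈ J := Ideal.subset_span ⟨p, hp, rfl⟩
      simpa [hJbot] using this
    · simpa using Finsupp.notMem_support_iff.mp hp
  calc z = Finsupp.linearCombination R id t := (hs z).symm
    _ = 0 := by rw [ht0, map_zero]
end

section
/- Let R be a commutative ring and I a finitely generated ideal such that the canonical map i : R → R̂ to the I-adic completion has an R-linear left inverse (i.e., i splits as a map of R-modules). Then i is an isomorphism. -/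
open AdicCompletion Submodule

section Aux

variable {R : Type*} [CommRing R] {I : Ideal R}

private lemma of_eq_algebraMap (r : R) :
    AdicCompletion.of I R r = algebraMap R (AdicCompletion I R) r := rfl

private lemma map_pi_mem_smul_top {k : ℕ} (n : ℕ) (f : (Fin k → R) →ₗ[R] R)
    (hf : ∀ x, f x ∈ I ^ n) (x : AdicCompletion I (Fin k → R)) :
    AdicCompletion.map I f x ∈ (I ^ n • ⊤ : Submodule R (AdicCompletion I R)) := by
  obtain ⟨a, rfl⟩ := AdicCompletion.mk_surjective I _ x
  have key : AdicCompletion.map I f (AdicCompletion.mk I _ a) =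
      ∑ i : Fin k, (f fun j => if i = j then 1 else 0) •
        AdicCompletion.map I (LinearMap.proj i) (AdicCompletion.mk I _ a) := by
    ext m
    simp only [AdicCompletion.map_mk, AdicCompletion.mk_apply_coe, AdicCompletion.val_sum,
      AdicCompletion.val_smul]
    have : (AdicCauchySequence.map I f a) m = f (a m) := rfl
    rw [this, LinearMap.pi_apply_eq_sum_univ f (a m)]
    have : ∀ i : Fin k, (AdicCauchySequence.map I (LinearMap.proj i) a) m = a m i := fun _ => rfl
    simp only [this, ← Submodule.mkQ_apply, map_sum, Finset.sum_apply, Pi.smul_apply, AdicCompletion.mk_apply_coe]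
    congr 1
    funext i
    rw [← map_smul, ← map_smul]
    congr 1
    simp [smul_eq_mul, mul_comm]
  rw [key]
  exact Submodule.sum_mem _ fun i _ =>
    Submodule.smul_mem_smul (hf _) Submodule.mem_top

end Aux

section Aux2

variable {R : Type*} [CommRing R] {I : Ideal R}

private lemma mem_smul_top_of_val_eq_zero (hI : I.FG) (n : ℕ) (y : AdicCompletion I R)
    (hy : y.val n = 0) : y ∈ (I ^ n • ⊤ : Submodule R (AdicCompletion I R)) := by
  obtain ⟨a, rfl⟩ := AdicCompletion.mk_surjective I R y
  set S : Submodule R R := (I ^ n • ⊤ : Submodule R R) with hS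
  have han : a n ∈ S := by
    rw [AdicCompletion.mk_apply_coe, Submodule.mkQ_apply, Submodule.Quotient.mk_eq_zero] at hy
    exact hy
  have hmem : ∀ m, a (m + n) ∈ S := by
    intro m
    have h1 := AdicCauchySequence.mk_eq_mk (Nat.le_add_left n m) a
    rw [Submodule.Quotient.eq] at h1
    simpa using S.add_mem h1 han
  -- the shifted sequence as a Cauchy sequence in S
  have hb : IsAdicCauchy I S (fun m => (⟨a (m + n), hmem m⟩ : S)) := by
    intro m l hml
    rw [SModEq.sub_mem, Submodule.mem_smul_top_iff]
    have h1 : a (m + n) - a (l + n) ∈ (I ^ (m + n) • ⊤ : Submodule R R) := by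
      have := AdicCauchySequence.mk_eq_mk (by omega : m + n ≤ l + n) a
      rw [Submodule.Quotient.eq] at this
      simpa using (I ^ (m + n) • ⊤ : Submodule R R).neg_mem this
    have h2 : (I ^ (m + n) • ⊤ : Submodule R R) = I ^ m • S := by
      rw [hS, pow_add, mul_smul]
    rw [h2] at h1
    exact h1
  set b : AdicCauchySequence I S := ⟨_, hb⟩ with hbdef
  -- mapping b into R recovers y
  have hyb : AdicCompletion.map I S.subtype (AdicCompletion.mk I S b) = AdicCompletion.mk I R a := by
    ext m
    simp only [AdicCompletion.map_mk, AdicCompletion.mk_apply_coe, Submodule.mkQ_apply]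
    have : (AdicCauchySequence.map I S.subtype b) m = a (m + n) := rfl
    rw [this]
    exact AdicCauchySequence.mk_eq_mk (show m ≤ m + n by omega) a
  -- S is a finite module, so get a surjection from Fin k → R
  have : Module.Finite R S := by
    rw [Module.Finite.iff_fg]
    have : S = I ^ n := by rw [hS, smul_eq_mul, Ideal.mul_top]
    rw [this]
    exact Submodule.FG.pow hI n
  obtain ⟨k, p, hp⟩ := Module.Finite.exists_fin' R S
  obtain ⟨z, hz⟩ := AdicCompletion.map_surjective I hp (AdicCompletion.mk I S b)
  rw [← hyb, ← hz, AdicCompletion.map_comp_apply]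
  refine map_pi_mem_smul_top n (S.subtype ∘ₗ p) (fun x => ?_) z
  have h3 : (I ^ n • ⊤ : Submodule R R) ≤ I ^ n := by
    rw [smul_eq_mul, Ideal.mul_top]
  exact h3 (p x).2

end Aux2

/-- Let `R` be a ring and `I` a finitely generated ideal such that the
canonical map `i : R → R̂` to the `I`-adic completion has an `R`-linear left inverse.
Then `i` is an isomorphism. -/
theorem adicCompletion_map_bijective_of_split (R : Type*) [CommRing R] (I : Ideal R)
    (hI : I.FG)
    (h : ∃ σ : AdicCompletion I R →ₗ[R] R,
      ∀ r : R, σ (algebraMap R (AdicCompletion I R) r) = r) :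
    Function.Bijective (algebraMap R (AdicCompletion I R)) := by
  obtain ⟨σ, hσ⟩ := h
  constructor
  · intro r s hrs
    have := congrArg σ hrs
    rwa [hσ, hσ] at this
  · intro x
    refine ⟨σ x, ?_⟩
    set y := x - algebraMap R (AdicCompletion I R) (σ x) with hy
    set p : AdicCompletion I R →ₗ[R] AdicCompletion I R :=
      LinearMap.id - (AdicCompletion.of I R) ∘ₗ σ with hp
    have hpalg : ∀ r : R, p (algebraMap R (AdicCompletion I R) r) = 0 := by
      intro r
      simp only [hp, LinearMap.sub_apply, LinearMap.id_apply, LinearMap.comp_apply, hσ,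
        of_eq_algebraMap, sub_self]
    have hσy : σ y = 0 := by
      rw [hy, map_sub, hσ, sub_self]
    have hpy : p y = y := by
      simp only [hp, LinearMap.sub_apply, LinearMap.id_apply, LinearMap.comp_apply, hσy,
        _root_.map_zero, sub_zero]
    have hmem : ∀ n, y ∈ (I ^ n • ⊤ : Submodule R (AdicCompletion I R)) := by
      intro n
      obtain ⟨s, hs⟩ := Submodule.Quotient.mk_surjective _ (y.val n)
      set z := y - algebraMap R (AdicCompletion I R) s with hz
      have hz0 : z.val n = 0 := by
        rw [hz, AdicCompletion.val_sub, ← of_eq_algebraMap, Pi.sub_apply, sub_eq_zero]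
        rw [AdicCompletion.of_apply, Submodule.mkQ_apply, hs]
      have hzmem := mem_smul_top_of_val_eq_zero hI n z hz0
      have hyz : y = p z := by
        have : p y = p z + p (algebraMap R (AdicCompletion I R) s) := by
          rw [← map_add, hz]; ring_nf
        rw [hpalg, add_zero] at this
        rw [← hpy, this]
      rw [hyz]
      refine Submodule.smul_induction_on hzmem (fun r hr m _ => ?_) (fun u v hu hv => ?_)
      · rw [map_smul]
        exact Submodule.smul_mem_smul hr Submodule.mem_top
      · rw [map_add]
        exact Submodule.add_mem _ hu hv
    have hy0 : y = 0 :=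
      IsHausdorff.haus (inferInstance : IsHausdorff I (AdicCompletion I R)) y
        (fun n => SModEq.zero.2 (hmem n))
    exact (sub_eq_zero.mp hy0).symm
end

section
/- Let R be a ring, I a finitely generated ideal, and suppose the I-adic completion map R → R̂ factors as R → B → R̂ where R/I → B/IB is an isomorphism. Then the induced map B → R̂ is identified with the IB-adic completion map of B; in particular there is an isomorphism R̂ ≅ B̂ (the IB-adic completion of B) compatible with B → R̂. -/
open Submodule AdicCompletion

section AdicAux

variable {R B : Type*} [CommRing R] [CommRing B]

lemma AdicAux.smul_top_eq {A : Type*} [CommRing A] (K : Ideal A) (n : ℕ) :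
    (K ^ n • ⊤ : Ideal A) = K ^ n := by
  rw [smul_eq_mul, Ideal.mul_top]

/-- The map `R ⧸ I^n•⊤ →+* B ⧸ (I.map f)^n•⊤` induced by `f`. -/
def AdicAux.phi (I : Ideal R) (f : R →+* B) (n : ℕ) :
    R ⧸ (I ^ n • ⊤ : Ideal R) →+* B ⧸ ((I.map f) ^ n • ⊤ : Ideal B) :=
  Ideal.quotientMap _ f (by
    rw [AdicAux.smul_top_eq, AdicAux.smul_top_eq, ← Ideal.map_pow]
    exact Ideal.le_comap_map)

lemma AdicAux.phi_mk (I : Ideal R) (f : R →+* B) (n : ℕ) (r : R) :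
    AdicAux.phi I f n (Ideal.Quotient.mk _ r) = Ideal.Quotient.mk _ (f r) :=
  rfl

/-- Evaluation at level `n` as a ring hom. -/
def AdicAux.evalRing (I : Ideal R) (n : ℕ) :
    AdicCompletion I R →+* R ⧸ (I ^ n • ⊤ : Ideal R) where
  toFun x := x.val n
  map_one' := rfl
  map_mul' _ _ := rfl
  map_zero' := rfl
  map_add' _ _ := rfl

lemma AdicAux.eval_vanish (I : Ideal R) (f : R →+* B) (g : B →+* AdicCompletion I R)
    (hfg : g.comp f = (algebraMap R (AdicCompletion I R) : R →+* AdicCompletion I R))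
    (n : ℕ) {b : B} (hb : b ∈ (I.map f) ^ n) :
    AdicAux.evalRing I n (g b) = 0 := by
  have hb' : b ∈ (I ^ n).map f := by rwa [Ideal.map_pow]
  have h1 : g b ∈ (I ^ n).map (g.comp f) := by
    rw [← Ideal.map_map]
    exact Ideal.mem_map_of_mem g hb'
  rw [hfg] at h1
  have h2 : AdicAux.evalRing I n (g b) ∈
      (I ^ n).map ((AdicAux.evalRing I n).comp (algebraMap R (AdicCompletion I R))) := by
    rw [← Ideal.map_map]
    exact Ideal.mem_map_of_mem _ h1
  have h3 : (AdicAux.evalRing I n).comp (algebraMap R (AdicCompletion I R)) =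
      Ideal.Quotient.mk (I ^ n • ⊤ : Ideal R) := rfl
  rw [h3] at h2
  have h4 : (I ^ n).map (Ideal.Quotient.mk (I ^ n • ⊤ : Ideal R)) ≤ ⊥ := by
    rw [Ideal.map_le_iff_le_comap]
    intro x hx
    simp only [Ideal.mem_comap, Ideal.mem_bot]
    rw [Ideal.Quotient.eq_zero_iff_mem, AdicAux.smul_top_eq]
    exact hx
  simpa using h4 h2

lemma AdicAux.step (I : Ideal R) (f : R →+* B)
    (hsur : ∀ b : B, ∃ r : R, b - f r ∈ I.map f) (n : ℕ) :
    ∀ j ∈ (I.map f) ^ n, ∃ r ∈ I ^ n, j - f r ∈ (I.map f) ^ (n + 1) := by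
  intro j hj
  rw [← Ideal.map_pow, Ideal.map] at hj
  induction hj using Submodule.span_induction with
  | mem x hx =>
    obtain ⟨s, hs, rfl⟩ := hx
    exact ⟨s, hs, by simp⟩
  | zero => exact ⟨0, zero_mem _, by simp⟩
  | add x y hx hy ihx ihy =>
    obtain ⟨r1, hr1, hd1⟩ := ihx
    obtain ⟨r2, hr2, hd2⟩ := ihy
    refine ⟨r1 + r2, add_mem hr1 hr2, ?_⟩
    have : x + y - f (r1 + r2) = (x - f r1) + (y - f r2) := by rw [map_add]; ring
    rw [this]
    exact add_mem hd1 hd2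
  | smul b x hx ihx =>
    obtain ⟨r, hr, hd⟩ := ihx
    obtain ⟨rb, hrb⟩ := hsur b
    refine ⟨rb * r, Ideal.mul_mem_left _ rb hr, ?_⟩
    have hfr : f r ∈ (I.map f) ^ n := by
      have := Ideal.mem_map_of_mem f hr
      rwa [Ideal.map_pow] at this
    have key : b • x - f (rb * r) = b * (x - f r) + (b - f rb) * f r := by
      rw [smul_eq_mul, map_mul]; ring
    rw [key]
    refine add_mem (Ideal.mul_mem_left _ b hd) ?_
    have := Ideal.mul_mem_mul hrb hfr
    rwa [← pow_succ'] at this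

lemma AdicAux.sur_all (I : Ideal R) (f : R →+* B)
    (hsur : ∀ b : B, ∃ r : R, b - f r ∈ I.map f) :
    ∀ n, ∀ b : B, ∃ r : R, b - f r ∈ (I.map f) ^ n := by
  intro n
  induction n with
  | zero => exact fun b => ⟨0, by simp⟩
  | succ n ih =>
    intro b
    obtain ⟨r, hr⟩ := ih b
    obtain ⟨r', _, hr'⟩ := AdicAux.step I f hsur n _ hr
    refine ⟨r + r', ?_⟩
    have : b - f (r + r') = b - f r - f r' := by rw [map_add]; ring
    rwa [this]

end AdicAux

/-- Let `R` be a ring, `I` a finitely generated ideal, and suppose the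
`I`-adic completion map `R → R̂` factors as `R → B → R̂` with `R/I → B/IB` an isomorphism.
Then `B → R̂` is identified with the `IB`-adic completion map of `B`: there is a ring
isomorphism `B̂ ≅ R̂` compatible with `B → R̂`. -/
theorem adicCompletion_factor_identification (R B : Type*) [CommRing R] [CommRing B]
    (I : Ideal R) (hI : I.FG) (f : R →+* B) (g : B →+* AdicCompletion I R)
    (hfg : g.comp f = (algebraMap R (AdicCompletion I R) : R →+* AdicCompletion I R))
    (hiso : Function.Bijective (Ideal.quotientMap (Ideal.map f I) f Ideal.le_comap_map)) :
    ∃ e : AdicCompletion (Ideal.map f I) B ≃+* AdicCompletion I R,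
      ∀ b : B, e (algebraMap B (AdicCompletion (Ideal.map f I) B) b) = g b := by
  -- surjectivity of `R → B/IB` in elementwise form
  have hsur1 : ∀ b : B, ∃ r : R, b - f r ∈ I.map f := by
    intro b
    obtain ⟨x, hx⟩ := hiso.2 (Ideal.Quotient.mk _ b)
    obtain ⟨r, rfl⟩ := Ideal.Quotient.mk_surjective x
    refine ⟨r, ?_⟩
    rw [Ideal.quotientMap_mk] at hx
    have := (Ideal.Quotient.eq).mp hx
    simpa using neg_mem this
  have hsur := AdicAux.sur_all I f hsur1
  -- each `φ n : R ⧸ I^n•⊤ →+* B ⧸ (I.map f)^n•⊤` is bijective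
  have hbij : ∀ n, Function.Bijective (AdicAux.phi I f n) := by
    intro n
    constructor
    · rw [injective_iff_map_eq_zero]
      intro a ha
      obtain ⟨r, rfl⟩ := Ideal.Quotient.mk_surjective a
      rw [AdicAux.phi_mk, Ideal.Quotient.eq_zero_iff_mem, AdicAux.smul_top_eq] at ha
      have h0 : AdicAux.evalRing I n (g (f r)) = 0 :=
        AdicAux.eval_vanish I f g hfg n ha
      have h1 : g (f r) = algebraMap R (AdicCompletion I R) r := RingHom.congr_fun hfg r
      rw [h1] at h0
      exact h0
    · intro y
      obtain ⟨b, rfl⟩ := Ideal.Quotient.mk_surjective y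
      obtain ⟨r, hr⟩ := hsur n b
      refine ⟨Ideal.Quotient.mk _ r, ?_⟩
      rw [AdicAux.phi_mk, Ideal.Quotient.eq, AdicAux.smul_top_eq]
      simpa using neg_mem hr
  set E : ∀ n, (R ⧸ (I ^ n • ⊤ : Ideal R)) ≃+* (B ⧸ ((I.map f) ^ n • ⊤ : Ideal B)) :=
    fun n => RingEquiv.ofBijective (AdicAux.phi I f n) (hbij n) with hE
  -- naturality
  have nat : ∀ m n (hmn : m ≤ n) (y : R ⧸ (I ^ n • ⊤ : Ideal R)),
      AdicCompletion.transitionMap (I.map f) B hmn (E n y)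
        = E m (AdicCompletion.transitionMap I R hmn y) := by
    intro m n hmn y
    obtain ⟨r, rfl⟩ := Ideal.Quotient.mk_surjective y
    rfl
  have natS : ∀ m n (hmn : m ≤ n) (x : B ⧸ ((I.map f) ^ n • ⊤ : Ideal B)),
      AdicCompletion.transitionMap I R hmn ((E n).symm x)
        = (E m).symm (AdicCompletion.transitionMap (I.map f) B hmn x) := by
    intro m n hmn x
    apply (E m).injective
    rw [(E m).apply_symm_apply, ← nat m n hmn, (E n).apply_symm_apply]
  refine ⟨{
    toFun := fun x => ⟨fun n => (E n).symm (x.val n), fun {m n} hmn => by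
      show AdicCompletion.transitionMap I R hmn ((E n).symm (x.val n)) = (E m).symm (x.val m)
      rw [natS m n hmn, x.2 hmn]⟩
    invFun := fun y => ⟨fun n => E n (y.val n), fun {m n} hmn => by
      show AdicCompletion.transitionMap (I.map f) B hmn (E n (y.val n)) = E m (y.val m)
      rw [nat m n hmn, y.2 hmn]⟩
    left_inv := fun x => Subtype.ext <| funext fun n => (E n).apply_symm_apply _
    right_inv := fun y => Subtype.ext <| funext fun n => (E n).symm_apply_apply _
    map_mul' := fun x y => Subtype.ext <| funext fun n => map_mul (E n).symm _ _
    map_add' := fun x y => Subtype.ext <| funext fun n => map_add (E n).symm _ _ }, ?_⟩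
  intro b
  apply Subtype.ext
  funext n
  show (E n).symm (Ideal.Quotient.mk ((I.map f) ^ n • ⊤ : Ideal B) b) = (g b).val n
  obtain ⟨r, hr⟩ := hsur n b
  have hval : (g b).val n = Ideal.Quotient.mk (I ^ n • ⊤ : Ideal R) r := by
    have hb : g b = g (f r) + g (b - f r) := by rw [← map_add]; congr 1; ring
    show AdicAux.evalRing I n (g b) = Ideal.Quotient.mk (I ^ n • ⊤ : Ideal R) r
    rw [hb, map_add, AdicAux.eval_vanish I f g hfg n hr, add_zero,
      show g (f r) = algebraMap R (AdicCompletion I R) r from RingHom.congr_fun hfg r]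
    rfl
  rw [hval]
  apply (E n).injective
  rw [(E n).apply_symm_apply]
  show Ideal.Quotient.mk _ b = Ideal.Quotient.mk _ (f r)
  rw [Ideal.Quotient.eq, AdicAux.smul_top_eq]
  exact hr
end

section
/- Let R be an F_p-algebra and I ⊆ R an ideal with I^{[p]} = I (the ideal generated by p-th powers of elements of I equals I). Then the relative Frobenius of the quotient map R → R/I, which is the canonical surjection R/I^{[p]} → R/I, is an isomorphism; consequently R → R/I satisfies the unique lifting property against all surjections A → A/J of R-algebras with J^{[p]} = 0. -/
universe u

/-- Let `R` be an `𝔽_p`-algebra and `I ⊆ R` an ideal with `I^{[p]} = I`.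
Then the relative Frobenius of `R → R/I`, i.e. the canonical surjection `R/I^{[p]} → R/I`,
is an isomorphism; consequently `R → R/I` satisfies the unique lifting property against all
surjections `A → A/J` of `R`-algebras with `J^{[p]} = 0`. -/
theorem quotient_bnil_formallyEtale_of_bracket_pow_eq (p : ℕ) [Fact p.Prime]
    (R : Type*) [CommRing R] [CharP R p] (I : Ideal R)
    (h : Ideal.span ((· ^ p) '' (I : Set R)) = I) :
    Function.Bijective (Ideal.Quotient.factor (S := Ideal.span ((· ^ p) '' (I : Set R))) (T := I) h.le) ∧
    ∀ (A : Type u) [CommRing A] [Algebra R A] (J : Ideal A), (∀ x ∈ J, x ^ p = 0) →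
      ∀ f : R ⧸ I →ₐ[R] A ⧸ J, ∃! g : R ⧸ I →ₐ[R] A,
        (Ideal.Quotient.mkₐ R J).comp g = f := by
  constructor
  · constructor
    · intro a b hab
      obtain ⟨x, rfl⟩ := Ideal.Quotient.mk_surjective a
      obtain ⟨y, rfl⟩ := Ideal.Quotient.mk_surjective b
      rw [Ideal.Quotient.factor_mk, Ideal.Quotient.factor_mk, Ideal.Quotient.eq] at hab
      rw [Ideal.Quotient.eq, h]
      exact hab
    · intro a
      obtain ⟨x, rfl⟩ := Ideal.Quotient.mk_surjective a
      exact ⟨Ideal.Quotient.mk _ x, Ideal.Quotient.factor_mk _ _⟩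
  · intro A _ _ J hJ f
    have hker : ∀ x ∈ I, Algebra.ofId R A x = 0 := by
      intro x hx
      rw [← h] at hx
      have hle : Ideal.span ((· ^ p) '' (I : Set R)) ≤ RingHom.ker (algebraMap R A) := by
        rw [Ideal.span_le]
        rintro _ ⟨y, hy, rfl⟩
        have h1 : algebraMap R (A ⧸ J) y = 0 := by
          have : algebraMap R (A ⧸ J) y = f (Ideal.Quotient.mk I y) := by
            rw [← f.commutes y]; rfl
          rw [this, Ideal.Quotient.eq_zero_iff_mem.2 hy, map_zero]
        have h2 : algebraMap R A y ∈ J := by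
          have : Ideal.Quotient.mk J (algebraMap R A y) = 0 := by
            rw [← h1]; rfl
          exact Ideal.Quotient.eq_zero_iff_mem.1 this
        show algebraMap R A (y ^ p) = 0
        rw [map_pow]
        exact hJ _ h2
      exact hle hx
    refine ⟨Ideal.Quotient.liftₐ I (Algebra.ofId R A) hker, ?_, ?_⟩
    · ext x
      obtain ⟨r, rfl⟩ := Ideal.Quotient.mk_surjective x
      show (Ideal.Quotient.mkₐ R J) ((Ideal.Quotient.liftₐ I (Algebra.ofId R A) hker)
        (Ideal.Quotient.mk I r)) = f (Ideal.Quotient.mk I r)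
      rw [Ideal.Quotient.liftₐ_apply]
      have : f (Ideal.Quotient.mk I r) = algebraMap R (A ⧸ J) r := by
        rw [← f.commutes r]; rfl
      rw [this]
      rfl
    · intro g hg
      ext x
      obtain ⟨r, rfl⟩ := Ideal.Quotient.mk_surjective x
      have h1 : g (Ideal.Quotient.mk I r) = algebraMap R A r := by
        rw [← g.commutes r]; rfl
      rw [h1, Ideal.Quotient.liftₐ_apply]
      rfl
end

section
/- Let φ : R → S be a map of F_p-algebras such that the relative Frobenius F_φ : S^(p) → S is an isomorphism. Then φ is formally étale: for every R-algebra A and ideal J ⊆ A with J² = 0, and every R-algebra map f : S → A/J, there exists a unique R-algebra lift S → A of f along A → A/J. -/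
open TensorProduct

/-- `F_* R`: the ring `R` viewed as an `R`-algebra via the (`p`-th power) Frobenius. -/
def FrobTwist (p : ℕ) (R : Type*) : Type _ := R

instance FrobTwist.instCommRing (p : ℕ) (R : Type*) [CommRing R] : CommRing (FrobTwist p R) :=
  inferInstanceAs (CommRing R)

/-- The identity of `R`, viewed as a map `R → F_* R`. -/
def FrobTwist.mk (p : ℕ) {R : Type*} [CommRing R] (r : R) : FrobTwist p R := r

noncomputable instance FrobTwist.instAlgebra (p : ℕ) (R : Type*) [CommRing R] [Fact p.Prime]
    [CharP R p] : Algebra R (FrobTwist p R) :=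
  RingHom.toAlgebra (show R →+* FrobTwist p R from frobenius R p)

/-- Auxiliary type synonym: `S` viewed as an `R`-algebra via `φ ∘ Frob_R`. -/
def FrobTarget (p : ℕ) (S : Type*) : Type _ := S

instance FrobTarget.instCommRing (p : ℕ) (S : Type*) [CommRing S] : CommRing (FrobTarget p S) :=
  inferInstanceAs (CommRing S)

def FrobTarget.out (p : ℕ) (S : Type*) [CommRing S] : FrobTarget p S →+* S := RingHom.id S

noncomputable instance FrobTarget.instAlgebra (p : ℕ) (R S : Type*) [CommRing R] [CommRing S]
    [Fact p.Prime] [CharP R p] [Algebra R S] : Algebra R (FrobTarget p S) :=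
  RingHom.toAlgebra
    ((show S →+* FrobTarget p S from RingHom.id S).comp
      ((algebraMap R S).comp (frobenius R p)))

/-- The relative Frobenius `S^{(p)} = F_* R ⊗_R S → S`, `r ⊗ s ↦ φ(r) s^p`. -/
noncomputable def relFrob (p : ℕ) (R S : Type*) [CommRing R] [CommRing S] [Fact p.Prime]
    [CharP R p] [CharP S p] [Algebra R S] :
    (FrobTwist p R ⊗[R] S) →+* S :=
  (FrobTarget.out p S).comp
    (Algebra.TensorProduct.productMap
      ({ toRingHom := show FrobTwist p R →+* FrobTarget p S from algebraMap R S
         commutes' := fun r => rfl } : FrobTwist p R →ₐ[R] FrobTarget p S)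
      ({ toRingHom := show S →+* FrobTarget p S from frobenius S p
         commutes' := fun r => by
            show frobenius S p (algebraMap R S r) = algebraMap R S (frobenius R p r)
            simp [frobenius_def] } : S →ₐ[R] FrobTarget p S)).toRingHom

theorem relFrob_tmul (p : ℕ) (R S : Type*) [CommRing R] [CommRing S] [Fact p.Prime]
    [CharP R p] [CharP S p] [Algebra R S] (r : R) (s : S) :
    relFrob p R S (FrobTwist.mk p r ⊗ₜ[R] s) = algebraMap R S r * s ^ p := by
  simp only [relFrob, FrobTarget.out, FrobTwist.mk, frobenius_def]
  rfl

universe u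

/-- Let `φ : R → S` be a map of `𝔽_p`-algebras whose relative Frobenius
`F_φ : S^{(p)} → S` is an isomorphism. Then `φ` is formally étale: for every `R`-algebra `A`
and ideal `J ⊆ A` with `J² = 0`, every `R`-algebra map `f : S → A/J` lifts uniquely to an
`R`-algebra map `S → A`. -/
theorem formallyEtale_of_relFrob_bijective (p : ℕ) [Fact p.Prime] (R S : Type*)
    [CommRing R] [CommRing S] [CharP R p] [CharP S p] [Algebra R S]
    (hbij : Function.Bijective (relFrob p R S)) :
    ∀ (A : Type u) [CommRing A] [Algebra R A] (J : Ideal A), J ^ 2 = ⊥ →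
      ∀ f : S →ₐ[R] A ⧸ J, ∃! g : S →ₐ[R] A, (Ideal.Quotient.mkₐ R J).comp g = f := by
  have hp : p.Prime := Fact.out
  intro A _ _ J hJ f
  -- `p = 0` in `A`
  have hpA : (p : A) = 0 := by
    rw [← map_natCast (algebraMap R A) p, CharP.cast_eq_zero R p, map_zero]
  -- the (absolute) Frobenius of `A`, as a ring hom
  let Fr : A →+* A :=
    { toFun := fun a => a ^ p
      map_one' := one_pow p
      map_mul' := fun a b => mul_pow a b p
      map_zero' := zero_pow hp.ne_zero
      map_add' := fun a b => by
        show (a + b) ^ p = a ^ p + b ^ p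
        obtain ⟨r, hr⟩ := exists_add_pow_prime_eq hp (x := a) (y := b)
        rw [hr, hpA, zero_mul, zero_mul, zero_mul, add_zero] }
  -- `J` is killed by Frobenius since `J ^ 2 = 0`
  have hJ0 : ∀ a ∈ J, a ^ p = 0 := by
    intro a ha
    have h2 : a ^ 2 = 0 := by
      have : a ^ 2 ∈ J ^ 2 := by
        rw [pow_two, pow_two]; exact Ideal.mul_mem_mul ha ha
      rwa [hJ, Ideal.mem_bot] at this
    calc a ^ p = a ^ 2 * a ^ (p - 2) := by
            rw [← pow_add, Nat.add_sub_cancel' hp.two_le]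
      _ = 0 := by rw [h2, zero_mul]
  -- hence Frobenius factors through `A ⧸ J`
  let τ : A ⧸ J →+* A := Ideal.Quotient.lift J Fr hJ0
  have hτ : ∀ a : A, τ (Ideal.Quotient.mk J a) = a ^ p := fun a => rfl
  have hτ' : ∀ x : A ⧸ J, Ideal.Quotient.mk J (τ x) = x ^ p := by
    intro x
    obtain ⟨a, rfl⟩ := Ideal.Quotient.mk_surjective x
    rw [hτ, map_pow]
  -- two Frobenius-killed elements with the same image in `A ⧸ J` have equal `p`-th powers
  have hpow_eq : ∀ a b : A, Ideal.Quotient.mk J a = Ideal.Quotient.mk J b →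
      a ^ p = b ^ p := by
    intro a b hab
    have hmem : a - b ∈ J := Ideal.Quotient.eq.mp hab
    have : a ^ p - b ^ p = (a - b) ^ p := (map_sub Fr a b).symm
    rw [hJ0 _ hmem] at this
    exact sub_eq_zero.mp this
  -- the map `S^{(p)} → A`, `r ⊗ s ↦ φ_A(r) · (lift of f s)^p`
  let α : FrobTwist p R →ₐ[R] FrobTarget p A :=
    { toRingHom := show FrobTwist p R →+* FrobTarget p A from algebraMap R A
      commutes' := fun r => rfl }
  let β : S →ₐ[R] FrobTarget p A :=
    { toRingHom := show S →+* FrobTarget p A from τ.comp f.toRingHom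
      commutes' := fun r => by
        show τ (f (algebraMap R S r)) = algebraMap R A (frobenius R p r)
        rw [AlgHom.commutes, frobenius_def, map_pow,
          show (algebraMap R (A ⧸ J)) r = Ideal.Quotient.mk J (algebraMap R A r) from rfl,
          hτ] }
  let G : (FrobTwist p R ⊗[R] S) →+* A :=
    (FrobTarget.out p A).comp (Algebra.TensorProduct.productMap α β).toRingHom
  have hG : ∀ (r : R) (s : S), G (FrobTwist.mk p r ⊗ₜ[R] s) = algebraMap R A r * τ (f s) :=
    fun r s => rfl
  -- the relative Frobenius as a ring isomorphism
  let e : (FrobTwist p R ⊗[R] S) ≃+* S := RingEquiv.ofBijective (relFrob p R S) hbij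
  let g₀ : S →+* A := G.comp e.symm.toRingHom
  have hg₀ : ∀ (r : R) (s : S), g₀ (algebraMap R S r * s ^ p) = algebraMap R A r * τ (f s) := by
    intro r s
    have h1 : e (FrobTwist.mk p r ⊗ₜ[R] s) = algebraMap R S r * s ^ p :=
      relFrob_tmul p R S r s
    have h2 : e.symm (algebraMap R S r * s ^ p) = FrobTwist.mk p r ⊗ₜ[R] s := by
      rw [← h1, RingEquiv.symm_apply_apply]
    show G (e.symm (algebraMap R S r * s ^ p)) = _
    rw [h2, hG]
  -- `g₀` is `R`-linear
  have hg₀alg : ∀ r : R, g₀ (algebraMap R S r) = algebraMap R A r := by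
    intro r
    have := hg₀ r 1
    simpa using this
  let g : S →ₐ[R] A := { toRingHom := g₀, commutes' := hg₀alg }
  -- `g` lifts `f`
  have hlift : (Ideal.Quotient.mkₐ R J).comp g = f := by
    apply AlgHom.ext
    intro s
    obtain ⟨x, rfl⟩ := hbij.2 s
    show Ideal.Quotient.mk J (g₀ (relFrob p R S x)) = f (relFrob p R S x)
    induction x with
    | zero => simp
    | tmul r s =>
      change R at r
      have hr : relFrob p R S (r ⊗ₜ[R] s) = algebraMap R S r * s ^ p :=
        relFrob_tmul p R S r s
      rw [hr, hg₀, map_mul, hτ', map_mul, map_pow, f.commutes]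
      rfl
    | add x y hx hy => simp only [map_add, hx, hy]
  -- uniqueness
  refine ⟨g, hlift, ?_⟩
  intro g' hg'
  apply AlgHom.ext
  intro s
  obtain ⟨x, rfl⟩ := hbij.2 s
  have hcomp : ∀ (t : S), Ideal.Quotient.mk J (g' t) = Ideal.Quotient.mk J (g t) := by
    intro t
    have h1 : Ideal.Quotient.mk J (g' t) = f t := AlgHom.congr_fun hg' t
    have h2 : Ideal.Quotient.mk J (g t) = f t := AlgHom.congr_fun hlift t
    rw [h1, h2]
  induction x with
  | zero => simp
  | tmul r t =>
    change R at r
    have hr : relFrob p R S (r ⊗ₜ[R] t) = algebraMap R S r * t ^ p :=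
      relFrob_tmul p R S r t
    rw [hr, map_mul, map_mul, map_pow, map_pow, g'.commutes, g.commutes,
      hpow_eq _ _ (hcomp t)]
  | add x y hx hy => simp only [map_add, hx, hy]
end

section
/- Let B → C be a ring map such that C is projective as a B-module, and such that for every ring map B → k with k a perfect field (of characteristic p), the base change k → C ⊗_B k is an isomorphism. Then B → C is an isomorphism. -/
open TensorProduct

universe u v

section NakayamaProjective

open IsLocalRing

/-- **Nakayama for projective modules**: a projective module `P` over a local ring
with `P = 𝔪 P` is trivial. -/
theorem aux_subsingleton_of_projective {R : Type*} [CommRing R] [IsLocalRing R]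
    (P : Type*) [AddCommGroup P] [Module R P] [Module.Projective R P]
    (hP : ∀ x : P, x ∈ (maximalIdeal R) • (⊤ : Submodule R P)) :
    Subsingleton P := by
  classical
  obtain ⟨s, hs⟩ := (Module.projective_def (R := R) (P := P)).mp ‹_›
  have hm : ∀ (y : P) (j : P), s y j ∈ maximalIdeal R := by
    intro y j
    refine Submodule.smul_induction_on (hP y) ?_ ?_
    · intro r hr n _
      rw [map_smul, Finsupp.smul_apply, smul_eq_mul]
      exact Ideal.mul_mem_right _ _ hr
    · intro a b ha hb
      rw [map_add, Finsupp.add_apply]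
      exact add_mem ha hb
  suffices hzero : ∀ x : P, x = 0 by
    exact ⟨fun a b => by rw [hzero a, hzero b]⟩
  intro x
  set T := (s x).support with hT
  have hx : x = ∑ i ∈ T, s x i • i := by
    conv_lhs => rw [← hs x]
    rw [Finsupp.linearCombination_apply, Finsupp.sum]
    rfl
  have hsx : s x = ∑ i ∈ T, s x i • s i := by
    conv_lhs => rw [hx, map_sum]
    simp only [map_smul]
  -- set up the matrix
  let A : Matrix T T R := fun j i => s (i : P) (j : P)
  let v : T → R := fun j => s x (j : P)
  have hAv : A.mulVec v = v := by
    funext j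
    have hkey := congrArg (fun f : P →₀ R => f (j : P)) hsx
    simp only [Finsupp.finset_sum_apply, Finsupp.smul_apply, smul_eq_mul] at hkey
    calc A.mulVec v j = ∑ i : T, A j i * v i := rfl
      _ = ∑ i ∈ T.attach, (fun i' : P => s i' (j : P) * s x i') (i : P) := by
          rw [Finset.univ_eq_attach]
      _ = ∑ i ∈ T, s i (j : P) * s x i :=
          Finset.sum_attach T (fun i' => s i' (j : P) * s x i')
      _ = ∑ i ∈ T, s x i * s i (j : P) := Finset.sum_congr rfl fun i _ => mul_comm _ _
      _ = v j := hkey.symm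
  have hv0 : (1 - A).mulVec v = 0 := by
    rw [Matrix.sub_mulVec, Matrix.one_mulVec, hAv, sub_self]
  have hdet : IsUnit (1 - A).det := by
    have hres : IsLocalRing.residue R ((1 - A).det) = 1 := by
      rw [RingHom.map_det]
      have hmap : (IsLocalRing.residue R).mapMatrix (1 - A) = 1 := by
        ext j i
        have hA0 : IsLocalRing.residue R (A j i) = 0 :=
          Ideal.Quotient.eq_zero_iff_mem.mpr (hm _ _)
        by_cases hji : j = i
        · subst hji
          simp [RingHom.mapMatrix_apply, Matrix.map_apply, Matrix.sub_apply,
            Matrix.one_apply, hA0]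
        · simp [RingHom.mapMatrix_apply, Matrix.map_apply, Matrix.sub_apply,
            Matrix.one_apply, hji, hA0]
      rw [hmap, Matrix.det_one]
    by_contra hu
    have hmem : (1 - A).det ∈ maximalIdeal R := by
      rwa [mem_maximalIdeal, mem_nonunits_iff]
    have : IsLocalRing.residue R ((1 - A).det) = 0 :=
      Ideal.Quotient.eq_zero_iff_mem.mpr hmem
    rw [hres] at this
    exact one_ne_zero this
  have hv : v = 0 := by
    have h1 := congrArg (fun w => (1 - A)⁻¹.mulVec w) hv0
    simpa [Matrix.mulVec_mulVec, Matrix.nonsing_inv_mul _ hdet] using h1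
  have hsx0 : s x = 0 := by
    ext j
    by_cases hj : j ∈ T
    · exact congrFun hv ⟨j, hj⟩
    · exact Finsupp.notMem_support_iff.mp hj
  rw [← hs x, hsx0, map_zero]

end NakayamaProjective

section LocalCore

open IsLocalRing

/-- The core local statement: if `M` is a projective module over a local ring `R`, `k` is a
field extension of the residue field, and `1 ⊗ u` spans `k ⊗[R] M` freely, then `u` spans
`M` freely. -/
theorem aux_local (R : Type*) [CommRing R] [IsLocalRing R]
    (M : Type*) [AddCommGroup M] [Module R M] [Module.Projective R M]
    (k : Type*) [Field k] [Algebra R k]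
    [Algebra (ResidueField R) k] [IsScalarTower R (ResidueField R) k]
    (u : M)
    (hbij : Function.Bijective (LinearMap.toSpanSingleton k (k ⊗[R] M) ((1 : k) ⊗ₜ[R] u))) :
    Function.Bijective (LinearMap.toSpanSingleton R M u) := by
  classical
  have halg : ∀ m ∈ maximalIdeal R, algebraMap R k m = 0 := by
    intro m hm
    rw [IsScalarTower.algebraMap_apply R (ResidueField R) k]
    have : algebraMap R (ResidueField R) m = 0 := Ideal.Quotient.eq_zero_iff_mem.mpr hm
    rw [this, map_zero]
  have hone : ((1 : k) ⊗ₜ[R] u) ≠ 0 := by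
    intro h0
    have h1 : (1 : k) = 0 := hbij.injective (by simp [LinearMap.toSpanSingleton_apply, h0])
    exact one_ne_zero h1
  -- u is not in 𝔪 M
  have hu : u ∉ (maximalIdeal R) • (⊤ : Submodule R M) := by
    intro hmem
    apply hone
    have hkill : ∀ z ∈ (maximalIdeal R) • (⊤ : Submodule R M),
        (TensorProduct.mk R k M 1) z = 0 := by
      intro z hz
      refine Submodule.smul_induction_on hz ?_ ?_
      · intro r hr n _
        rw [map_smul, TensorProduct.mk_apply, TensorProduct.smul_tmul',
          ← Algebra.algebraMap_eq_smul_one, halg r hr, TensorProduct.zero_tmul]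
      · intro a b ha hb
        rw [map_add, ha, hb, add_zero]
    simpa using hkill u hmem
  -- find a coordinate functional not vanishing at u
  obtain ⟨s, hs⟩ := (Module.projective_def (R := R) (P := M)).mp ‹_›
  have hexists : ∃ i : M, s u i ∉ maximalIdeal R := by
    by_contra hall
    push_neg at hall
    apply hu
    have hx : u = ∑ i ∈ (s u).support, s u i • i := by
      conv_lhs => rw [← hs u]
      rw [Finsupp.linearCombination_apply, Finsupp.sum]
      rfl
    rw [hx]
    exact Submodule.sum_mem _ fun i _ =>
      Submodule.smul_mem_smul (hall i) Submodule.mem_top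
  obtain ⟨i, hi⟩ := hexists
  have hunit : IsUnit (s u i) := by
    by_contra hnu
    exact hi (mem_maximalIdeal _ |>.mpr (mem_nonunits_iff.mpr hnu))
  let ψ : M →ₗ[R] R := (hunit.unit⁻¹ : Rˣ) • ((Finsupp.lapply i).comp s)
  have hψu : ψ u = 1 := by
    show (hunit.unit⁻¹ : Rˣ) • (s u i) = 1
    rw [Units.smul_def, smul_eq_mul]
    exact hunit.val_inv_mul
  have hinj : Function.Injective (LinearMap.toSpanSingleton R M u) := by
    intro a b hab
    have h1 : ψ (a • u) = ψ (b • u) := by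
      simpa [LinearMap.toSpanSingleton_apply] using congrArg ψ hab
    simpa [map_smul, hψu] using h1
  -- the complement of the line spanned by u
  set K := LinearMap.ker ψ with hK
  have hmemσ : ∀ x : M, x - ψ x • u ∈ K := by
    intro x
    simp [hK, LinearMap.mem_ker, map_sub, map_smul, hψu]
  let σ : M →ₗ[R] K :=
    LinearMap.codRestrict K (LinearMap.id - (LinearMap.toSpanSingleton R M u).comp ψ)
      (fun x => by simpa using hmemσ x)
  have hσcoe : ∀ x : M, ((σ x : K) : M) = x - ψ x • u := fun x => rfl
  have hσ : σ ∘ₗ K.subtype = LinearMap.id := by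
    ext x
    have hx0 : ψ (x : M) = 0 := x.2
    show ((σ (x : M) : K) : M) = (x : M)
    rw [hσcoe, hx0, zero_smul, sub_zero]
  haveI hKproj : Module.Projective R K := Module.Projective.of_split K.subtype σ hσ
  -- k ⊗ K is trivial
  have hsub : Subsingleton (k ⊗[R] K) := by
    refine subsingleton_of_forall_eq 0 fun w => ?_
    have h1 : LinearMap.lTensor k ψ (LinearMap.lTensor k K.subtype w) = 0 := by
      rw [← LinearMap.comp_apply, ← LinearMap.lTensor_comp]
      have hψK : ψ ∘ₗ K.subtype = 0 := by
        ext x; exact x.2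
      rw [hψK, LinearMap.lTensor_zero]
      rfl
    obtain ⟨a, ha⟩ := hbij.surjective (LinearMap.lTensor k K.subtype w)
    rw [LinearMap.toSpanSingleton_apply] at ha
    have hsmul : a • ((1 : k) ⊗ₜ[R] u) = a ⊗ₜ[R] u := by
      rw [TensorProduct.smul_tmul', smul_eq_mul, mul_one]
    have ha' : a ⊗ₜ[R] u = LinearMap.lTensor k K.subtype w := by
      rw [← hsmul, ha]
    have h2 : a = 0 := by
      have h3 := congrArg (LinearMap.lTensor k ψ) ha'
      rw [h1, LinearMap.lTensor_tmul, hψu] at h3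
      have h4 := congrArg (TensorProduct.rid R k) h3
      simpa using h4
    rw [h2, TensorProduct.zero_tmul] at ha'
    have h5 : LinearMap.lTensor k σ (LinearMap.lTensor k K.subtype w) = w := by
      rw [← LinearMap.comp_apply, ← LinearMap.lTensor_comp, hσ, LinearMap.lTensor_id]
      rfl
    rw [← h5, ← ha', map_zero]
  -- descend to the residue field
  haveI : Module.FaithfullyFlat (ResidueField R) k := inferInstance
  have hsub2 : Subsingleton ((ResidueField R) ⊗[R] K) := by
    haveI : Subsingleton (k ⊗[ResidueField R] ((ResidueField R) ⊗[R] K)) :=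
      (AlgebraTensorModule.cancelBaseChange R (ResidueField R) k k K).toEquiv.subsingleton
    exact Module.FaithfullyFlat.lTensor_reflects_triviality (ResidueField R) k _
  have hK0 : ∀ x : K, x ∈ (maximalIdeal R) • (⊤ : Submodule R K) := by
    haveI : Subsingleton ((R ⧸ maximalIdeal R) ⊗[R] K) := hsub2
    haveI : Subsingleton (K ⧸ ((maximalIdeal R) • (⊤ : Submodule R K))) :=
      (quotTensorEquivQuotSMul K (maximalIdeal R)).toEquiv.symm.subsingleton
    intro x
    have : (Submodule.Quotient.mk x : K ⧸ ((maximalIdeal R) • (⊤ : Submodule R K))) = 0 :=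
      Subsingleton.elim _ _
    exact (Submodule.Quotient.mk_eq_zero _).mp this
  haveI hKzero : Subsingleton K := aux_subsingleton_of_projective K hK0
  have hsurj : Function.Surjective (LinearMap.toSpanSingleton R M u) := by
    intro x
    refine ⟨ψ x, ?_⟩
    have h6 : σ x = 0 := Subsingleton.elim _ _
    have h7 : x - ψ x • u = 0 := by
      rw [← hσcoe, h6]; rfl
    rw [LinearMap.toSpanSingleton_apply]
    exact (sub_eq_zero.mp h7).symm
  exact ⟨hinj, hsurj⟩

end LocalCore

/-- Let `B → C` be a map of `𝔽_p`-algebras such that `C` is projective as a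
`B`-module, and such that for every map `B → k` with `k` a perfect field of characteristic `p`,
the base change `k → C ⊗_B k` is an isomorphism. Then `B → C` is an isomorphism. -/
theorem bijective_of_projective_of_perfect_fibers (p : ℕ) [Fact p.Prime]
    (B : Type u) (C : Type v) [CommRing B] [CommRing C] [Algebra B C]
    [CharP B p] [Module.Projective B C]
    (h : ∀ (k : Type u) [Field k] [CharP k p] [PerfectRing k p] [Algebra B k],
      Function.Bijective (Algebra.TensorProduct.includeRight : k →ₐ[B] C ⊗[B] k)) :
    Function.Bijective (algebraMap B C) := by
  classical
  haveI hloc : ∀ (P : Ideal B) [P.IsMaximal],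
      IsLocalizedModule P.primeCompl ((TensorProduct.mk B (Localization.AtPrime P) C) 1) :=
    fun P _ => (isLocalizedModule_iff_isBaseChange P.primeCompl (Localization.AtPrime P) _).mpr
      (TensorProduct.isBaseChange B C (Localization.AtPrime P))
  have key : ∀ (P : Ideal B) [P.IsMaximal], Function.Bijective
      (IsLocalizedModule.map P.primeCompl (Algebra.linearMap B (Localization.AtPrime P))
        ((TensorProduct.mk B (Localization.AtPrime P) C) 1) (Algebra.linearMap B C)) := by
    intro P hP
    set R := Localization.AtPrime P with hR
    -- identify the localized map with `toSpanSingleton R (R ⊗[B] C) (1 ⊗ₜ 1)`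
    have heq : (IsLocalizedModule.map P.primeCompl (Algebra.linearMap B R)
          ((TensorProduct.mk B R C) 1) (Algebra.linearMap B C))
        = (LinearMap.toSpanSingleton R (R ⊗[B] C) ((1 : R) ⊗ₜ (1 : C))).restrictScalars B := by
      apply IsLocalizedModule.ext P.primeCompl (Algebra.linearMap B R)
        (IsLocalizedModule.map_units ((TensorProduct.mk B R C) 1))
      rw [IsLocalizedModule.map_comp]
      refine LinearMap.ext_ring ?_
      show (1 : R) ⊗ₜ[B] (algebraMap B C 1)
        = (algebraMap B R 1) • ((1 : R) ⊗ₜ[B] (1 : C))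
      simp
    rw [heq]
    show Function.Bijective (LinearMap.toSpanSingleton R (R ⊗[B] C) ((1 : R) ⊗ₜ (1 : C)))
    -- set up the perfect field
    set κ := IsLocalRing.ResidueField R with hκ
    set k := AlgebraicClosure κ with hk
    haveI : CharP κ p := by
      have hp0 : (p : κ) = 0 := by
        have h1 : (p : κ) = algebraMap R κ (p : R) := (map_natCast _ p).symm
        have h2 : (p : R) = algebraMap B R (p : B) := (map_natCast _ p).symm
        rw [h1, h2, CharP.cast_eq_zero B p, map_zero, map_zero]
      exact (CharP.charP_iff_prime_eq_zero Fact.out).mpr hp0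
    haveI : CharP k p := inferInstance
    haveI : PerfectRing k p := inferInstance
    have hkbij := h k
    refine aux_local R (R ⊗[B] C) k ((1 : R) ⊗ₜ (1 : C)) ?_
    have hfun : ⇑(LinearMap.toSpanSingleton k (k ⊗[R] (R ⊗[B] C))
          ((1 : k) ⊗ₜ[R] ((1 : R) ⊗ₜ (1 : C))))
        = ⇑(AlgebraTensorModule.cancelBaseChange B R k k C).symm ∘
          (⇑(TensorProduct.comm B k C).symm ∘
            ⇑(Algebra.TensorProduct.includeRight : k →ₐ[B] C ⊗[B] k)) := by
      funext x
      show x • ((1 : k) ⊗ₜ[R] ((1 : R) ⊗ₜ (1 : C)))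
        = (AlgebraTensorModule.cancelBaseChange B R k k C).symm
            ((TensorProduct.comm B k C).symm ((1 : C) ⊗ₜ[B] x))
      rw [TensorProduct.comm_symm_tmul, AlgebraTensorModule.cancelBaseChange_symm_tmul,
        TensorProduct.smul_tmul', smul_eq_mul, mul_one]
    rw [hfun]
    exact (AlgebraTensorModule.cancelBaseChange B R k k C).symm.bijective.comp
      ((TensorProduct.comm B k C).symm.bijective.comp hkbij)
  exact @bijective_of_isLocalized_maximal B B C _ _ _ _ _
    (fun P _ => Localization.AtPrime P) _ _
    (fun P _ => Algebra.linearMap B (Localization.AtPrime P)) (fun P _ => inferInstance)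
    (fun P _ => (Localization.AtPrime P) ⊗[B] C) _ _
    (fun P _ => (TensorProduct.mk B (Localization.AtPrime P) C) 1) (fun P _ => hloc P)
    (Algebra.linearMap B C) key
end

section
/- Let R be a Noetherian ring of characteristic p > 0 and I ⊆ R an ideal such that R/I is F-finite (the Frobenius on R/I is a finite ring map). Then the I-adic completion R̂ of R is F-finite. -/
open AdicCompletion

section FFiniteAux

variable {R : Type*} [CommRing R] (I : Ideal R)

private lemma ffin_smulTop_eq (n : ℕ) : (I ^ n • ⊤ : Ideal R) = I ^ n := by
  ext x; simp

private lemma ffin_val_algebraMap (x : R) (n : ℕ) :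
    ((algebraMap R (AdicCompletion I R)) x).val n =
      Submodule.Quotient.mk (p := (I ^ n • ⊤ : Ideal R)) x :=
  rfl

/-- If `b` lies in the ideal generated by the image of `I ^ n`, then its `n`-th component
vanishes. -/
private lemma ffin_val_eq_zero_of_mem_map {n : ℕ} {b : AdicCompletion I R}
    (hb : b ∈ (I ^ n).map (algebraMap R (AdicCompletion I R))) : b.val n = 0 := by
  rw [Ideal.map] at hb
  refine Submodule.span_induction ?_ rfl ?_ ?_ hb
  · rintro x ⟨y, hy, rfl⟩
    rw [ffin_val_algebraMap, Submodule.Quotient.mk_eq_zero, ffin_smulTop_eq]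
    exact hy
  · intro x y _ _ hx hy
    rw [val_add_apply, hx, hy, add_zero]
  · intro a x _ hx
    show (a • x).val n = 0
    exact (val_mul (n := n) (x := a) (y := x)).trans (by rw [hx, mul_zero])

/-- Key strictness lemma: over a Noetherian ring, an element of the adic completion whose
`n`-th component vanishes lies in the ideal generated by the image of `I ^ n`. -/
private lemma ffin_mem_map_of_val_eq_zero [IsNoetherianRing R] {n : ℕ}
    {b : AdicCompletion I R} (hb : b.val n = 0) :
    b ∈ (I ^ n).map (algebraMap R (AdicCompletion I R)) := by
  set S : Submodule R R := (I ^ n • ⊤ : Ideal R) with hS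
  have hexact := AdicCompletion.map_exact (I := I) (Submodule.injective_subtype S)
      (LinearMap.exact_subtype_mkQ S) (S.mkQ_surjective)
  have hzero : AdicCompletion.map I S.mkQ b = 0 := by
    ext k
    obtain ⟨x, hx⟩ := Submodule.Quotient.mk_surjective _ (b.val k)
    rw [map_val_apply, ← hx, LinearMap.reduceModIdeal_apply, val_zero_apply,
      Submodule.Quotient.mk_eq_zero]
    rcases le_total k n with hkn | hnk
    · have hbk : b.val k = 0 := by
        rw [← transitionMap_comp_eval_apply I R hkn b, hb]
        exact (transitionMap I R hkn).map_zero
      rw [hbk] at hx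
      have hxk : x ∈ (I ^ k • ⊤ : Submodule R R) := (Submodule.Quotient.mk_eq_zero _).mp hx
      have hmem : S.mkQ x ∈ Submodule.map S.mkQ (I ^ k • ⊤ : Submodule R R) :=
        Submodule.mem_map_of_mem hxk
      rwa [Submodule.map_smul'', Submodule.map_top, Submodule.range_mkQ] at hmem
    · have hbn : Submodule.Quotient.mk (p := S) x = 0 := by
        rw [← hb, ← transitionMap_comp_eval_apply I R hnk b, ← hx]; rfl
      have : S.mkQ x = 0 := by
        rw [Submodule.mkQ_apply, hbn]
      rw [this]
      exact zero_mem _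
  obtain ⟨z, hz⟩ := (hexact b).mp hzero
  obtain ⟨w, hw⟩ := ofTensorProduct_surjective_of_finite I ↥S z
  rw [← hz, ← hw]
  clear hz hw
  induction w using TensorProduct.induction_on with
  | zero => simp only [_root_.map_zero]; exact zero_mem _
  | tmul a m =>
      rw [ofTensorProduct_tmul, map_smul]
      have hval : AdicCompletion.map I S.subtype (of I (↥S) m)
          = algebraMap R (AdicCompletion I R) (m : R) := by
        ext k
        rfl
      rw [hval]
      have hm : (m : R) ∈ I ^ n := by
        have h2 : (m : R) ∈ (I ^ n • ⊤ : Ideal R) := m.2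
        rwa [ffin_smulTop_eq] at h2
      exact Ideal.mul_mem_left _ a (Ideal.mem_map_of_mem _ hm)
  | add x y hx hy => rw [map_add, map_add]; exact add_mem hx hy

/-- The set of monomials of total degree `j` in the family `f`. -/
private def ffinMonomials {ι : Type*} [Fintype ι] {R : Type*} [CommRing R]
    (f : ι → R) (j : ℕ) : Set R :=
  {x | ∃ e : ι → ℕ, (∑ i, e i) = j ∧ x = ∏ i, f i ^ e i}

private lemma ffin_prod_pow_mem_pow {ι : Type*} [Fintype ι] (f : ι → R)
    (hf : ∀ i, f i ∈ I) (e : ι → ℕ) : (∏ i, f i ^ e i) ∈ I ^ (∑ i, e i) := by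
  rw [← Finset.prod_pow_eq_pow_sum]
  exact Ideal.prod_mem_prod fun i _ => Ideal.pow_mem_pow (hf i) _

private lemma ffin_pow_le_span_monomials {ι : Type*} [Fintype ι] (f : ι → R)
    (hspan : Ideal.span (Set.range f) = I) :
    ∀ j : ℕ, I ^ j ≤ Ideal.span (ffinMonomials f j) := by
  classical
  intro j
  induction j with
  | zero =>
      rw [pow_zero, Ideal.one_eq_top]
      intro x _
      have h1 : (1 : R) ∈ ffinMonomials f 0 := ⟨0, by simp, by simp⟩
      simpa using Ideal.mul_mem_left _ x (Ideal.subset_span h1)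
  | succ j ih =>
      rw [pow_succ]
      calc I ^ j * I ≤ Ideal.span (ffinMonomials f j) * Ideal.span (Set.range f) :=
            Ideal.mul_mono ih (le_of_eq hspan.symm)
        _ = Ideal.span (⋃ s ∈ ffinMonomials f j, ⋃ t ∈ Set.range f, {s * t}) :=
            by rw [Ideal.span_mul_span']; congr 1; ext x; simp [Set.mem_mul, eq_comm]
        _ ≤ Ideal.span (ffinMonomials f (j + 1)) := by
            apply Ideal.span_mono
            rintro x hx
            simp only [Set.mem_iUnion, Set.mem_singleton_iff] at hx
            obtain ⟨s, ⟨e, he, rfl⟩, t, ⟨i₀, rfl⟩, rfl⟩ := hx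
            refine ⟨fun i => e i + (if i = i₀ then 1 else 0), ?_, ?_⟩
            · simp [Finset.sum_add_distrib, he, Finset.sum_ite_eq']
            · have h1 : (∏ i, f i ^ (e i + (if i = i₀ then 1 else 0)))
                  = (∏ i, f i ^ e i) * ∏ i, f i ^ (if i = i₀ then 1 else 0) := by
                rw [← Finset.prod_mul_distrib]
                exact Finset.prod_congr rfl fun i _ => pow_add _ _ _
              have h2 : (∏ i, f i ^ (if i = i₀ then 1 else 0)) = f i₀ := by
                simp [pow_ite, Finset.prod_ite_eq']
              rw [h1, h2]

end FFiniteAux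

/-- A ring `A` (of characteristic `p`) is *F-finite* if `A` is a finitely generated module over
its subring `A^p` of `p`-th powers: there are finitely many elements `b` such that every
element of `A` is a linear combination of the `b`'s with coefficients that are `p`-th powers. -/
def IsFFinite (p : ℕ) (A : Type*) [CommRing A] : Prop :=
  ∃ s : Finset A, ∀ a : A, ∃ c : A → A, a = ∑ b ∈ s, c b ^ p * b

/-- Let `R` be a Noetherian ring of characteristic `p > 0` and `I ⊆ R` an
ideal such that `R/I` is `F`-finite. Then the `I`-adic completion `R̂` of `R` is `F`-finite. -/
theorem isFFinite_adicCompletion (p : ℕ) [Fact p.Prime] (R : Type*) [CommRing R]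
    [IsNoetherianRing R] [CharP R p] (I : Ideal R)
    (h : IsFFinite p (R ⧸ I)) :
    IsFFinite p (AdicCompletion I R) := by
  classical
  obtain ⟨sbar, hsbar⟩ := h
  have hp : p.Prime := Fact.out
  by_cases htriv : Subsingleton (AdicCompletion I R)
  · exact ⟨∅, fun a => ⟨0, by simpa using (Subsingleton.elim a 0)⟩⟩
  haveI : Nontrivial (AdicCompletion I R) := not_subsingleton_iff_nontrivial.mp htriv
  haveI hcharA : CharP (AdicCompletion I R) p := by
    have h0 : ((p : ℕ) : AdicCompletion I R) = 0 := by
      rw [← map_natCast (algebraMap R (AdicCompletion I R)) p, CharP.cast_eq_zero R p,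
        RingHom.map_zero]
    have hdvd : ringChar (AdicCompletion I R) ∣ p := ringChar.dvd h0
    rcases (Nat.Prime.eq_one_or_self_of_dvd hp _ hdvd) with h1 | hp'
    · exact absurd h1 (CharP.ringChar_ne_one)
    · rw [← hp']
      exact ringChar.charP _
  haveI : ExpChar (AdicCompletion I R) p := ExpChar.prime hp
  -- generators of `I`
  obtain ⟨ff, hff⟩ := IsNoetherian.noetherian I
  set f : {x : R // x ∈ ff} → R := fun x => (x : R) with hfdef
  have hrange : Set.range f = (ff : Set R) := Subtype.range_coe
  have hspan : Ideal.span (Set.range f) = I := by rw [hrange]; exact hff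
  have hfI : ∀ i, f i ∈ I := fun i => by
    rw [← hspan]; exact Ideal.subset_span (Set.mem_range_self i)
  set N : ℕ := Fintype.card {x : R // x ∈ ff} * (p - 1) with hN
  set φ : R →+* AdicCompletion I R := algebraMap R (AdicCompletion I R) with hφ
  set Q : ℕ → Ideal (AdicCompletion I R) := fun n => (I ^ n).map φ with hQ
  have hQle : ∀ {m n : ℕ}, m ≤ n → Q n ≤ Q m :=
    fun hmn => Ideal.map_mono (Ideal.pow_le_pow_right hmn)
  have hQmul : ∀ {m n : ℕ} {x y : AdicCompletion I R},
      x ∈ Q m → y ∈ Q n → x * y ∈ Q (m + n) := by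
    intro m n x y hx hy
    have h2 := Ideal.mul_mem_mul hx hy
    rwa [← Ideal.map_mul, ← pow_add] at h2
  have hQval : ∀ {n : ℕ} {b : AdicCompletion I R}, b ∈ Q n → b.val n = 0 :=
    fun hb => ffin_val_eq_zero_of_mem_map I hb
  have hvalQ : ∀ {n : ℕ} {b : AdicCompletion I R}, b.val n = 0 → b ∈ Q n :=
    fun hb => ffin_mem_map_of_val_eq_zero I hb
  have hQ0 : ∀ x : AdicCompletion I R, x ∈ Q 0 := by
    intro x
    rw [hQ]
    simp only [pow_zero, Ideal.one_eq_top, Ideal.map_top]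
    exact Submodule.mem_top
  -- lift from `R ⧸ I`
  set L : R ⧸ I → R := Function.surjInv Ideal.Quotient.mk_surjective with hL
  have hLmk : ∀ y, Ideal.Quotient.mk I (L y) = y := fun y => Function.surjInv_eq _ y
  -- the generating set
  set τ := {b : R ⧸ I // b ∈ sbar} × ({x : R // x ∈ ff} → Fin p) with hτ
  set tval : τ → AdicCompletion I R :=
    fun t => φ (L (t.1 : R ⧸ I) * ∏ i, f i ^ ((t.2 i : ℕ))) with htval
  -- first-order decomposition
  have F1 : ∀ u : AdicCompletion I R, ∃ c : {b : R ⧸ I // b ∈ sbar} → R,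
      u - ∑ b, φ (c b) ^ p * φ (L (b : R ⧸ I)) ∈ Q 1 := by
    intro u
    obtain ⟨x, hx⟩ := Submodule.Quotient.mk_surjective _ (u.val 1)
    have hux : u - φ x ∈ Q 1 := by
      apply hvalQ
      rw [val_sub_apply, ffin_val_algebraMap, hx, sub_self]
    obtain ⟨cb, hcb⟩ := hsbar (Ideal.Quotient.mk I x)
    refine ⟨fun b : {b : R ⧸ I // b ∈ sbar} => L (cb (b : R ⧸ I)), ?_⟩
    have hxs : x - ∑ b : {b : R ⧸ I // b ∈ sbar}, (L (cb (b : R ⧸ I))) ^ p * L (b : R ⧸ I) ∈ I := by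
      rw [← Ideal.Quotient.eq_zero_iff_mem, map_sub, map_sum]
      have h2 : ∀ b : {b : R ⧸ I // b ∈ sbar},
          Ideal.Quotient.mk I ((L (cb (b : R ⧸ I))) ^ p * L (b : R ⧸ I))
            = cb (b : R ⧸ I) ^ p * (b : R ⧸ I) := by
        intro b
        rw [map_mul, map_pow, hLmk, hLmk]
      rw [Finset.sum_congr rfl (fun b _ => h2 b),
        Finset.sum_coe_sort sbar (fun b => cb b ^ p * b), ← hcb, sub_self]
    have hsplit : u - ∑ b : {b : R ⧸ I // b ∈ sbar}, φ (L (cb (b : R ⧸ I))) ^ p * φ (L (b : R ⧸ I))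
        = (u - φ x) + φ (x - ∑ b : {b : R ⧸ I // b ∈ sbar},
            (L (cb (b : R ⧸ I))) ^ p * L (b : R ⧸ I)) := by
      rw [map_sub, map_sum]
      simp only [map_mul, map_pow]
      ring
    rw [hsplit]
    refine add_mem hux (Ideal.mem_map_of_mem _ ?_)
    rwa [pow_one]
  have hmon : ∀ e : {x : R // x ∈ ff} → ℕ, φ (∏ i, f i ^ e i) ∈ Q (∑ i, e i) :=
    fun e => Ideal.mem_map_of_mem _ (ffin_prod_pow_mem_pow I f hfI e)
  -- the step lemma
  have S : ∀ (j : ℕ) (r : AdicCompletion I R), r ∈ Q j →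
      ∃ c : τ → AdicCompletion I R, (∀ t, c t ∈ Q ((j - N) / p)) ∧
        r - ∑ t, c t ^ p * tval t ∈ Q (j + 1) := by
    intro j r hr
    have h1 : r ∈ Ideal.span (φ '' ffinMonomials f j) := by
      have h2 : (I ^ j).map φ ≤ (Ideal.span (ffinMonomials f j)).map φ :=
        Ideal.map_mono (ffin_pow_le_span_monomials I f hspan j)
      rw [Ideal.map_span] at h2
      exact h2 hr
    obtain ⟨n, u, g, hsum⟩ := Submodule.mem_span_set'.mp h1
    -- prove the property for each term and sum up
    have Pterm : ∀ (v : AdicCompletion I R) (e : {x : R // x ∈ ff} → ℕ), (∑ i, e i) = j →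
        ∃ c : τ → AdicCompletion I R, (∀ t, c t ∈ Q ((j - N) / p)) ∧
          v * φ (∏ i, f i ^ e i) - ∑ t, c t ^ p * tval t ∈ Q (j + 1) := by
      intro v e he
      obtain ⟨cb, hcb⟩ := F1 v
      set q : {x : R // x ∈ ff} → ℕ := fun i => e i / p with hq
      set σ : {x : R // x ∈ ff} → Fin p := fun i => ⟨e i % p, Nat.mod_lt _ hp.pos⟩ with hσ
      have hsplit : (∏ i, f i ^ e i) = (∏ i, f i ^ q i) ^ p * ∏ i, f i ^ ((σ i : ℕ)) := by
        rw [← Finset.prod_pow, ← Finset.prod_mul_distrib]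
        refine Finset.prod_congr rfl fun i _ => ?_
        rw [← pow_mul, ← pow_add]
        congr 1
        simp only [hq, hσ]
        exact (Nat.div_add_mod' (e i) p).symm
      have hqsum : (j - N) / p ≤ ∑ i, q i := by
        have h1 : ∀ i, e i ≤ p * q i + (p - 1) := by
          intro i
          have h2 := Nat.div_add_mod (e i) p
          have h3 := Nat.mod_lt (e i) hp.pos
          simp only [hq]
          calc e i = p * (e i / p) + e i % p := h2.symm
            _ ≤ p * (e i / p) + (p - 1) := Nat.add_le_add_left (Nat.le_sub_one_of_lt h3) _
        have h2 : j ≤ p * (∑ i, q i) + N := by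
          calc j = ∑ i, e i := he.symm
            _ ≤ ∑ i, (p * q i + (p - 1)) := Finset.sum_le_sum (fun i _ => h1 i)
            _ = p * (∑ i, q i) + N := by
                rw [Finset.sum_add_distrib, ← Finset.mul_sum, Finset.sum_const,
                  Finset.card_univ, smul_eq_mul, hN]
        have h3 : j - N ≤ p * (∑ i, q i) := by omega
        calc (j - N) / p ≤ (p * (∑ i, q i)) / p := Nat.div_le_div_right h3
          _ = ∑ i, q i := Nat.mul_div_cancel_left _ hp.pos
      refine ⟨fun t => if t.2 = σ then φ (cb t.1) * φ (∏ i, f i ^ q i) else 0, ?_, ?_⟩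
      · intro t
        dsimp only
        split
        · exact Ideal.mul_mem_left _ _ (hQle hqsum (hmon q))
        · exact zero_mem _
      · have hsum2 : (∑ t : τ, (if t.2 = σ then φ (cb t.1) * φ (∏ i, f i ^ q i) else 0) ^ p
              * tval t)
            = (∑ b, φ (cb b) ^ p * φ (L (b : R ⧸ I)))
              * φ ((∏ i, f i ^ q i) ^ p * ∏ i, f i ^ ((σ i : ℕ))) := by
          rw [Fintype.sum_prod_type, Finset.sum_mul]
          refine Finset.sum_congr rfl fun b _ => ?_
          have h2 : ∀ s' : {x : R // x ∈ ff} → Fin p,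
              (if s' = σ then φ (cb b) * φ (∏ i, f i ^ q i) else 0) ^ p * tval (b, s')
                = if s' = σ then (φ (cb b) * φ (∏ i, f i ^ q i)) ^ p * tval (b, s') else 0 := by
            intro s'
            split
            · rfl
            · rw [zero_pow hp.ne_zero, zero_mul]
          rw [Finset.sum_congr rfl (fun s' _ => h2 s'), Finset.sum_ite_eq' Finset.univ σ
            (fun s' => (φ (cb b) * φ (∏ i, f i ^ q i)) ^ p * tval (b, s'))]
          simp only [Finset.mem_univ, if_true, htval, map_mul, map_pow]
          ring
        have hfinal : v * φ (∏ i, f i ^ e i)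
              - ∑ t : τ, (if t.2 = σ then φ (cb t.1) * φ (∏ i, f i ^ q i) else 0) ^ p * tval t
            = (v - ∑ b, φ (cb b) ^ p * φ (L (b : R ⧸ I)))
              * φ ((∏ i, f i ^ q i) ^ p * ∏ i, f i ^ ((σ i : ℕ))) := by
          rw [hsum2]
          nth_rewrite 1 [hsplit]
          ring
        rw [hfinal]
        have h3 : φ ((∏ i, f i ^ q i) ^ p * ∏ i, f i ^ ((σ i : ℕ))) ∈ Q j := by
          rw [← hsplit]
          have := hmon e
          rwa [he] at this
        have h4 := hQmul hcb h3
        rwa [add_comm] at h4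
    -- now combine the terms
    have Pzero : ∃ c : τ → AdicCompletion I R, (∀ t, c t ∈ Q ((j - N) / p)) ∧
        (0 : AdicCompletion I R) - ∑ t, c t ^ p * tval t ∈ Q (j + 1) := by
      refine ⟨0, fun t => zero_mem _, ?_⟩
      simp only [Pi.zero_apply, zero_pow hp.ne_zero, zero_mul, Finset.sum_const_zero, sub_zero]
      exact zero_mem _
    have Padd : ∀ x y : AdicCompletion I R,
        (∃ c : τ → AdicCompletion I R, (∀ t, c t ∈ Q ((j - N) / p)) ∧
          x - ∑ t, c t ^ p * tval t ∈ Q (j + 1)) →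
        (∃ c : τ → AdicCompletion I R, (∀ t, c t ∈ Q ((j - N) / p)) ∧
          y - ∑ t, c t ^ p * tval t ∈ Q (j + 1)) →
        (∃ c : τ → AdicCompletion I R, (∀ t, c t ∈ Q ((j - N) / p)) ∧
          (x + y) - ∑ t, c t ^ p * tval t ∈ Q (j + 1)) := by
      rintro x y ⟨c₁, hc₁, hr₁⟩ ⟨c₂, hc₂, hr₂⟩
      refine ⟨fun t => c₁ t + c₂ t, fun t => add_mem (hc₁ t) (hc₂ t), ?_⟩
      have h2 : ∀ t : τ, (c₁ t + c₂ t) ^ p * tval t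
          = c₁ t ^ p * tval t + c₂ t ^ p * tval t := by
        intro t
        rw [add_pow_char, add_mul]
      rw [Finset.sum_congr rfl (fun t _ => h2 t), Finset.sum_add_distrib]
      have h3 : x + y - (∑ t, c₁ t ^ p * tval t + ∑ t, c₂ t ^ p * tval t)
          = (x - ∑ t, c₁ t ^ p * tval t) + (y - ∑ t, c₂ t ^ p * tval t) := by ring
      rw [h3]
      exact add_mem hr₁ hr₂
    rw [← hsum]
    refine Finset.sum_induction _ _ Padd Pzero ?_
    intro i _
    obtain ⟨x, hx, hgx⟩ := (g i).2
    obtain ⟨e, he, rfl⟩ := hx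
    have h2 : u i • ((g i : AdicCompletion I R)) = u i * φ (∏ i', f i' ^ e i') := by
      rw [← hgx, smul_eq_mul]
    rw [h2]
    exact Pterm (u i) e he
  -- choose the step data
  choose step hstep1 hstep2 using S
  refine ⟨Finset.image tval Finset.univ, fun a => ?_⟩
  -- iterate the step lemma
  let T : ℕ → Type _ := fun j => {r : AdicCompletion I R // r ∈ Q j}
  let next : ∀ j, T j → T (j + 1) :=
    fun j r => ⟨r.1 - ∑ t, (step j r.1 r.2 t) ^ p * tval t, hstep2 j r.1 r.2⟩
  let seq : ∀ j, T j := fun j => Nat.rec ⟨a, hQ0 a⟩ next j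
  let c : ℕ → τ → AdicCompletion I R := fun j => step j (seq j).1 (seq j).2
  have hseq : ∀ j, (seq (j + 1)).1 = (seq j).1 - ∑ t, (c j t) ^ p * tval t := fun j => rfl
  have hcQ : ∀ j t, c j t ∈ Q ((j - N) / p) := fun j t => hstep1 j (seq j).1 (seq j).2 t
  -- partial sums
  let Ssum : ℕ → τ → AdicCompletion I R := fun K t => ∑ j ∈ Finset.range K, c j t
  have htel : ∀ K, (seq K).1 = a - ∑ t, (Ssum K t) ^ p * tval t := by
    intro K
    induction K with
    | zero =>
        show a = a - ∑ t, (Ssum 0 t) ^ p * tval t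
        simp only [Ssum, Finset.range_zero, Finset.sum_empty, zero_pow hp.ne_zero, zero_mul,
          Finset.sum_const_zero, sub_zero]
    | succ K ih =>
        rw [hseq K, ih]
        have h2 : ∀ t : τ, (Ssum (K + 1) t) ^ p * tval t
            = (Ssum K t) ^ p * tval t + (c K t) ^ p * tval t := by
          intro t
          have h3 : Ssum (K + 1) t = Ssum K t + c K t := Finset.sum_range_succ _ _
          rw [h3, add_pow_char, add_mul]
        rw [Finset.sum_congr rfl (fun t _ => h2 t), Finset.sum_add_distrib]
        ring
  have htail : ∀ (m : ℕ) (t : τ) (K K' : ℕ), p * m + N ≤ K → K ≤ K' →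
      Ssum K' t - Ssum K t ∈ Q m := by
    intro m t K K' hK hKK'
    rw [← Finset.sum_Ico_eq_sub _ hKK']
    refine Submodule.sum_mem _ fun j hj => ?_
    rw [Finset.mem_Ico] at hj
    refine hQle ?_ (hcQ j t)
    rw [Nat.le_div_iff_mul_le hp.pos]
    have h2 : p * m + N ≤ j := le_trans hK hj.1
    rw [mul_comm] at h2
    exact Nat.le_sub_of_add_le h2
  -- the limit coefficients
  have hKmono : ∀ {m n : ℕ}, m ≤ n → p * m + N ≤ p * n + N := by
    intro m n hmn
    exact Nat.add_le_add_right (Nat.mul_le_mul_left p hmn) N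
  let C : τ → AdicCompletion I R := fun t =>
    ⟨fun n => (Ssum (p * n + N) t).val n, by
      intro m n hmn
      rw [transitionMap_comp_eval_apply]
      have h2 : (Ssum (p * n + N) t - Ssum (p * m + N) t).val m = 0 :=
        hQval (htail m t _ _ le_rfl (hKmono hmn))
      rw [val_sub_apply, sub_eq_zero] at h2
      exact h2⟩
  have hCval : ∀ t n, (C t).val n = (Ssum (p * n + N) t).val n := fun t n => rfl
  have hCdiff : ∀ t n, C t - Ssum (p * n + N) t ∈ Q n := by
    intro t n
    apply hvalQ
    rw [val_sub_apply, hCval, sub_self]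
  -- the limit identity
  have hfin : a = ∑ t, (C t) ^ p * tval t := by
    have hzero : ∀ n, (a - ∑ t, (C t) ^ p * tval t).val n = 0 := by
      intro n
      set K := p * n + N with hKdef
      have hdecomp : a - ∑ t, (C t) ^ p * tval t
          = (seq K).1 + ∑ t, ((Ssum K t) ^ p - (C t) ^ p) * tval t := by
        rw [htel K]
        have h2 : ∑ t, ((Ssum K t) ^ p - (C t) ^ p) * tval t
            = ∑ t, (Ssum K t) ^ p * tval t - ∑ t, (C t) ^ p * tval t := by
          rw [← Finset.sum_sub_distrib]
          exact Finset.sum_congr rfl fun t _ => by ring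
        rw [h2]
        ring
      rw [hdecomp]
      apply hQval
      have hnK : n ≤ K := by
        rw [hKdef]
        calc n ≤ p * n := Nat.le_mul_of_pos_left n hp.pos
          _ ≤ p * n + N := Nat.le_add_right _ _
      refine add_mem (hQle hnK (seq K).2) (Submodule.sum_mem _ fun t _ => ?_)
      have h1 : Ssum K t - C t ∈ Q n := by
        have h2 := hCdiff t n
        have h3 : Ssum K t - C t = -(C t - Ssum K t) := by ring
        rw [h3]
        exact neg_mem h2
      have h4 : (Ssum K t) ^ p - (C t) ^ p = (Ssum K t - C t) ^ p := (sub_pow_char _ _).symm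
      rw [h4]
      refine Ideal.mul_mem_right _ _ ?_
      have h5 : (Ssum K t - C t) ^ p = (Ssum K t - C t) ^ (p - 1) * (Ssum K t - C t) := by
        rw [← pow_succ]
        congr 1
        exact (Nat.succ_pred_eq_of_pos hp.pos).symm
      rw [h5]
      exact Ideal.mul_mem_left _ _ h1
    have h6 : a - ∑ t, (C t) ^ p * tval t = 0 :=
      AdicCompletion.ext fun n => by rw [hzero n, val_zero_apply]
    exact sub_eq_zero.mp h6
  -- regroup the sum over the image
  refine ⟨fun b => ∑ t ∈ Finset.univ.filter (fun t => tval t = b), C t, ?_⟩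
  rw [Finset.sum_image' (fun t => (C t) ^ p * tval t) ?_]
  · exact hfin
  · intro i _
    have h7 : (∑ t ∈ Finset.univ.filter (fun t => tval t = tval i), C t) ^ p
        = ∑ t ∈ Finset.univ.filter (fun t => tval t = tval i), (C t) ^ p := by
      have := map_sum (frobenius (AdicCompletion I R) p)
        (fun t => C t) (Finset.univ.filter (fun t => tval t = tval i))
      simpa only [frobenius_def] using this
    rw [h7, Finset.sum_mul]
    refine Finset.sum_congr rfl fun t ht => ?_
    rw [Finset.mem_filter] at ht
    simp only [ht.2]
end

section
/- Let R be an F_p-algebra, φ : R → S a ring map, and suppose {f_i}_{i∈I} ⊆ S is a p-basis of S over R (i.e., the monomials ∏ f_i^{n_i} with 0 ≤ n_i < p, almost all zero, form a basis of S as a module over R[S^p], the image of the relative Frobenius). Then the canonical R[S^p]-algebra map R[S^p][T_i : i ∈ I]/(T_i^p − f_i^p : i ∈ I) → S sending T̄_i to f_i is an isomorphism. -/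
set_option maxHeartbeats 1600000
set_option synthInstance.maxHeartbeats 400000
open MvPolynomial


/-- Let `φ : R → S` be a map of `𝔽_p`-algebras and `{f_i}_{i ∈ ι} ⊆ S` a
`p`-basis of `S` over `R`: the monomials `∏ f_i^{n_i}` with `0 ≤ n_i < p` (almost all zero)
form a basis of `S` as a module over `R[S^p]` (the image of the relative Frobenius, i.e. the
subring generated by the image of `R` and `p`-th powers).  Then the canonical `R[S^p]`-algebra
map `R[S^p][T_i : i ∈ ι]/(T_i^p − f_i^p) → S`, `T_i ↦ f_i`, is an isomorphism: the evaluation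
map `R[S^p][T_i] → S` is surjective with kernel the ideal `(T_i^p − f_i^p : i ∈ ι)`. -/
theorem pBasis_presentation (p : ℕ) [Fact p.Prime] (R S : Type*) [CommRing R] [CommRing S]
    [Algebra R S] [CharP S p] (ι : Type*) (f : ι → S)
    (hli : LinearIndependent (↥(Algebra.adjoin R (Set.range fun s : S => s ^ p)))
      (fun n : {n : ι →₀ ℕ // ∀ i, n i < p} =>
        ((n : ι →₀ ℕ).prod fun i e => f i ^ e)))
    (hspan : Submodule.span (↥(Algebra.adjoin R (Set.range fun s : S => s ^ p)))
      (Set.range fun n : {n : ι →₀ ℕ // ∀ i, n i < p} =>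
        ((n : ι →₀ ℕ).prod fun i e => f i ^ e)) = ⊤) :
    Function.Surjective
      (MvPolynomial.aeval (R := ↥(Algebra.adjoin R (Set.range fun s : S => s ^ p))) f) ∧
    RingHom.ker
        (MvPolynomial.aeval (R := ↥(Algebra.adjoin R (Set.range fun s : S => s ^ p))) f
          : MvPolynomial ι ↥(Algebra.adjoin R (Set.range fun s : S => s ^ p)) →ₐ[_] S).toRingHom
      = Ideal.span (Set.range fun i : ι =>
          MvPolynomial.X i ^ p -
            MvPolynomial.C
              (⟨f i ^ p, Algebra.subset_adjoin ⟨f i, rfl⟩⟩ :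
                ↥(Algebra.adjoin R (Set.range fun s : S => s ^ p)))) := by
  classical
  set A := Algebra.adjoin R (Set.range fun s : S => s ^ p) with hA
  set c : ι → ↥A := fun i => ⟨f i ^ p, Algebra.subset_adjoin ⟨f i, rfl⟩⟩ with hc
  set G : ι → MvPolynomial ι ↥A := fun i => X i ^ p - C (c i) with hG
  have hp2 : 2 ≤ p := (Fact.out : p.Prime).two_le
  have halg : ∀ a : ↥A, algebraMap ↥A S a = (a : S) := fun a => rfl
  have haevalG : ∀ i, aeval (R := ↥A) f (G i) = 0 := by
    intro i
    simp [hG, hc, halg]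
  -- ⊇ : the ideal is contained in the kernel
  have hIker : Ideal.span (Set.range G) ≤ RingHom.ker (aeval (R := ↥A) f).toRingHom := by
    rw [Ideal.span_le]
    rintro _ ⟨i, rfl⟩
    simpa [RingHom.mem_ker] using haevalG i
  -- surjectivity
  have hsurj : Function.Surjective (aeval (R := ↥A) f) := by
    intro s
    have hs : s ∈ Submodule.span ↥A (Set.range fun n : {n : ι →₀ ℕ // ∀ i, n i < p} =>
        ((n : ι →₀ ℕ).prod fun i e => f i ^ e)) := hspan ▸ Submodule.mem_top
    have hle : Submodule.span ↥A (Set.range fun n : {n : ι →₀ ℕ // ∀ i, n i < p} =>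
        ((n : ι →₀ ℕ).prod fun i e => f i ^ e)) ≤
        Subalgebra.toSubmodule (aeval (R := ↥A) f).range := by
      rw [Submodule.span_le]
      rintro _ ⟨n, rfl⟩
      exact ⟨monomial (n : ι →₀ ℕ) 1, by simp [aeval_monomial]⟩
    exact hle hs
  refine ⟨hsurj, le_antisymm ?_ hIker⟩
  -- ⊆ direction
  set I' : Submodule ↥A (MvPolynomial ι ↥A) :=
    (Ideal.span (Set.range G)).restrictScalars ↥A with hI'
  set M : Submodule ↥A (MvPolynomial ι ↥A) :=
    Submodule.span ↥A (Set.range fun n : {n : ι →₀ ℕ // ∀ i, n i < p} =>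
      monomial (n : ι →₀ ℕ) (1 : ↥A)) with hM
  have hred : ∀ (n : ι →₀ ℕ) (a : ↥A), (∀ i, n i < p) → monomial n a ∈ M ⊔ I' := by
    intro n a h
    have : monomial n a = a • monomial n (1 : ↥A) := by rw [smul_monomial, smul_eq_mul, mul_one]
    rw [this]
    exact Submodule.mem_sup_left <|
      Submodule.smul_mem _ a (Submodule.subset_span ⟨⟨n, h⟩, rfl⟩)
  have hle : ∀ (n : ι →₀ ℕ) (i : ι), n i ≤ n.sum fun _ e => e := by
    intro n i
    by_cases h : n i = 0
    · simp [h]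
    · exact Finset.single_le_sum (fun j _ => Nat.zero_le _) (Finsupp.mem_support_iff.mpr h)
  have key : ∀ (N : ℕ) (n : ι →₀ ℕ) (a : ↥A), (n.sum fun _ e => e) ≤ N →
      monomial n a ∈ M ⊔ I' := by
    intro N
    induction N with
    | zero =>
      intro n a hn
      refine hred n a fun i => ?_
      have := hle n i
      omega
    | succ N ih =>
      intro n a hn
      by_cases h : ∀ i, n i < p
      · exact hred n a h
      · push_neg at h
        obtain ⟨i, hi⟩ := h
        have hsub : (n - Finsupp.single i p) + Finsupp.single i p = n := by
          ext j
          by_cases hj : j = i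
          · subst hj; simp [Nat.sub_add_cancel hi]
          · have hij : i ≠ j := fun h => hj h.symm
            simp [Finsupp.single_apply, hij]
        have hdecomp : monomial n a
            = monomial (n - Finsupp.single i p) a * G i
              + monomial (n - Finsupp.single i p) (a * c i) := by
          rw [hG]
          simp only [mul_sub, X_pow_eq_monomial, C_apply, monomial_mul, hsub, mul_one,
            add_zero]
          abel
        rw [hdecomp]
        refine add_mem ?_ ?_
        · refine Submodule.mem_sup_right ?_
          rw [hI', Submodule.restrictScalars_mem]
          exact Ideal.mul_mem_left _ _ (Ideal.subset_span ⟨i, rfl⟩)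
        · refine ih _ _ ?_
          have hsum : ((n - Finsupp.single i p).sum fun _ e => e) + p = n.sum fun _ e => e := by
            conv_rhs => rw [← hsub]
            rw [Finsupp.sum_add_index' (fun _ => rfl) (fun _ _ _ => rfl),
              Finsupp.sum_single_index rfl]
          omega
  have hall : ∀ P : MvPolynomial ι ↥A, P ∈ M ⊔ I' := by
    intro P
    induction P using MvPolynomial.induction_on' with
    | monomial n a => exact key _ n a le_rfl
    | add q r hq hr => exact add_mem hq hr
  intro P hP
  rw [RingHom.mem_ker] at hP
  obtain ⟨m, hm, q, hq, rfl⟩ := Submodule.mem_sup.mp (hall P)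
  rw [hI', Submodule.restrictScalars_mem] at hq
  have hq0 : aeval (R := ↥A) f q = 0 := hIker hq
  have hm0 : aeval (R := ↥A) f m = 0 := by
    have h' : aeval (R := ↥A) f m + aeval (R := ↥A) f q = 0 := by
      rw [← map_add]; exact hP
    rw [hq0, add_zero] at h'; exact h'
  -- m = 0 from linear independence
  obtain ⟨l, hl⟩ := Finsupp.mem_span_range_iff_exists_finsupp.mp hm
  have hcomb : (Finsupp.linearCombination ↥A
      (fun n : {n : ι →₀ ℕ // ∀ i, n i < p} =>
        ((n : ι →₀ ℕ).prod fun i e => f i ^ e))) l = 0 := by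
    rw [Finsupp.linearCombination_apply]
    have heq : aeval (R := ↥A) f m
        = l.sum fun n a => a • ((n : ι →₀ ℕ).prod fun i e => f i ^ e) := by
      rw [← hl, Finsupp.sum, map_sum, Finsupp.sum]
      refine Finset.sum_congr rfl fun n _ => ?_
      rw [map_smul, aeval_monomial, map_one, one_mul]
    rw [← heq, hm0]
  have hl0 : l = 0 := linearIndependent_iff.mp hli l hcomb
  have hm0' : m = 0 := by rw [← hl, hl0, Finsupp.sum_zero_index]
  rw [hm0', zero_add]
  exact hq
end
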